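/- arXiv:1105.6046 — 9 statements merged into one kernel-verified Lean document; each statement's English description precedes it below -/
import Mathlib

section
/- Let X be a real Banach space with separable dual X* and let {(x_i, x_i*)}_{i∈ℕ} be a shrinking M-basis of X. Let W ⊂ X be a closed convex bounded set with non-empty interior such that 0 ∈ int(W), and let 0 < ε < 1/8. Then there exists a weak-* compact subset F ⊂ W° such that: (1) (1/(1+4ε))·W° ⊆ weak-* closed convex hull of F ⊆ (1/(1+ε))·W°; and (2) for each i ∈ ℕ the set {f(x_i) : f ∈ F} is finite. -/
open Filter Topology Pointwise

/-- `{(x i, xs i)}` is an M-basis of `X`: a biorthogonal system whose vectors have dense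
linear span in `X` and whose functionals have weak-* dense linear span in `X*`. -/
def IsMBasis {X : Type*} [NormedAddCommGroup X] [NormedSpace ℝ X]
    (x : ℕ → X) (xs : ℕ → StrongDual ℝ X) : Prop :=
  (∀ i j : ℕ, xs i (x j) = if i = j then 1 else 0) ∧
  closure ((Submodule.span ℝ (Set.range x) : Submodule ℝ X) : Set X) = Set.univ ∧
  closure (StrongDual.toWeakDual ''
      ((Submodule.span ℝ (Set.range xs) : Submodule ℝ (StrongDual ℝ X)) :
        Set (StrongDual ℝ X))) = Set.univ

/-- A shrinking M-basis: an M-basis whose functionals have norm-dense linear span in `X*`. -/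
def IsShrinkingMBasis {X : Type*} [NormedAddCommGroup X] [NormedSpace ℝ X]
    (x : ℕ → X) (xs : ℕ → StrongDual ℝ X) : Prop :=
  IsMBasis x xs ∧
  closure ((Submodule.span ℝ (Set.range xs) : Submodule ℝ (StrongDual ℝ X)) :
      Set (StrongDual ℝ X)) = Set.univ

/-!
Let `c = 1/(1+ε)` and `a = 1/(1+4ε)`, and take for `F` the functionals of `c • W°` whose value
at each `x i` lies in a grid `δ i • ℤ`. Banach–Alaoglu makes `c • W°` weak-* compact and the
grid conditions are weak-* closed, so `F` is weak-* compact; each set of values `f (x i)` is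
then a compact subset of the discrete set `δ i • ℤ`, hence finite. For the lower inclusion,
shrinkingness approximates any `g ∈ a • W°` in norm by a finite combination `∑ dᵢ xsᵢ`;
rounding each `dᵢ` to its two neighbouring grid points writes it as a convex combination of
grid combinations, which lie in `F`'s grid by biorthogonality and move by at most
`∑ δᵢ ‖xsᵢ‖`. If this is below `(c - a) / R`, where `W ⊆ closedBall 0 R`, they stay in `c • W°`.
-/

theorem Real.mem_convexHull_zmultiples_inter_closedBall {δ : ℝ} (hδ : 0 < δ) (a : ℝ) :
    a ∈ convexHull ℝ (AddSubgroup.zmultiples δ ∩ Metric.closedBall a δ : Set ℝ) := by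
  set k := ⌊a / δ⌋
  have hlo : k * δ ≤ a := (le_div_iff₀ hδ).1 (Int.floor_le _)
  have hhi : a < (k + 1) * δ := (div_lt_iff₀ hδ).1 (Int.lt_floor_add_one _)
  have hseg : a ∈ convexHull ℝ {(k : ℝ) * δ, (k + 1) * δ} := by
    rw [convexHull_pair, segment_eq_Icc (by linarith)]
    exact ⟨hlo, hhi.le⟩
  refine convexHull_mono ?_ hseg
  rw [Real.closedBall_eq_Icc]
  rintro b (rfl | rfl)
  · exact ⟨⟨k, zsmul_eq_mul _ _⟩, by linarith, by linarith⟩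
  · exact ⟨⟨k + 1, by push_cast [zsmul_eq_mul]; ring⟩, by linarith, by linarith⟩

theorem Finset.sum_smul_mem_convexHull_image_pi_zmultiples {ι E : Type*} [AddCommGroup E]
    [Module ℝ E] (v : ι → E) {δ : ι → ℝ} (hδ : ∀ i, 0 < δ i) (a : ι → ℝ) (s : Finset ι) :
    ∑ i ∈ s, a i • v i ∈ convexHull ℝ ((fun b : ι → ℝ => ∑ i ∈ s, b i • v i) ''
      (s : Set ι).pi fun i => AddSubgroup.zmultiples (δ i) ∩ Metric.closedBall (a i) (δ i)) := by
  classical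
  induction s using Finset.induction with
  | empty => exact subset_convexHull _ _ ⟨0, by simp, by simp⟩
  | @insert j s hj ih =>
    have hj' : a j • v j ∈ convexHull ℝ ((· • v j) ''
        (AddSubgroup.zmultiples (δ j) ∩ Metric.closedBall (a j) (δ j) : Set ℝ)) := by
      rw [show (· • v j) = ⇑(LinearMap.toSpanSingleton ℝ E (v j)) from rfl,
        ← LinearMap.image_convexHull]
      exact ⟨a j, Real.mem_convexHull_zmultiples_inter_closedBall (hδ j) (a j), rfl⟩
    have hsum := Set.add_mem_add hj' ih
    rw [← convexHull_add] at hsum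
    rw [Finset.sum_insert hj]
    refine convexHull_mono ?_ hsum
    rintro _ ⟨_, ⟨c, hc, rfl⟩, _, ⟨b, hb, rfl⟩, rfl⟩
    have hupd : ∀ i ∈ s, Function.update b j c i = b i := fun i hi =>
      Function.update_of_ne (ne_of_mem_of_not_mem hi hj) _ _
    refine ⟨Function.update b j c, fun i hi => ?_, ?_⟩
    · rcases Finset.mem_insert.1 hi with rfl | hi
      · simpa using hc
      · simpa [hupd i hi] using hb i hi
    · simp only [Finset.sum_insert hj, Function.update_self]
      rw [Finset.sum_congr rfl fun i hi => by rw [hupd i hi]]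

section StrongDual

variable {X : Type*} [NormedAddCommGroup X] [NormedSpace ℝ X]

def gridFunctionals {ι : Type*} (x : ι → X) (δ : ι → ℝ) : Set (StrongDual ℝ X) :=
  {f | ∀ i, f (x i) ∈ AddSubgroup.zmultiples (δ i)}

theorem sum_smul_apply_of_biorthogonal {ι : Type*} [DecidableEq ι] {x : ι → X}
    {xs : ι → StrongDual ℝ X} (hbio : ∀ i j, xs i (x j) = if i = j then 1 else 0)
    (b : ι → ℝ) (s : Finset ι) (j : ι) :
    (∑ i ∈ s, b i • xs i) (x j) = if j ∈ s then b j else 0 := by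
  simp [hbio]

theorem exists_pos_forall_sum_mul_norm_le {ι E : Type*} [Countable ι] [SeminormedAddCommGroup E]
    (v : ι → E) {ρ : ℝ} (hρ : 0 < ρ) :
    ∃ δ : ι → ℝ, (∀ i, 0 < δ i) ∧ ∀ s : Finset ι, ∑ i ∈ s, δ i * ‖v i‖ ≤ ρ := by
  obtain ⟨η, hη, hηρ⟩ := Set.countable_univ.exists_pos_forall_sum_le (ι := ι) hρ
  refine ⟨fun i => η i / (1 + ‖v i‖), fun i => div_pos (hη i) (by positivity), fun s => ?_⟩
  refine le_trans (Finset.sum_le_sum fun i _ => ?_) (hηρ s (Set.subset_univ _))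
  rw [div_mul_eq_mul_div, div_le_iff₀ (by positivity)]
  nlinarith [hη i, norm_nonneg (v i)]

theorem mem_convexHull_gridFunctionals_of_mem_span {ι : Type*} [DecidableEq ι] {x : ι → X}
    {xs : ι → StrongDual ℝ X} (hbio : ∀ i j, xs i (x j) = if i = j then 1 else 0)
    {δ : ι → ℝ} (hδ : ∀ i, 0 < δ i) {ρ : ℝ} (hδρ : ∀ s : Finset ι, ∑ i ∈ s, δ i * ‖xs i‖ ≤ ρ)
    {p : StrongDual ℝ X} (hp : p ∈ Submodule.span ℝ (Set.range xs)) :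
    p ∈ convexHull ℝ (gridFunctionals x δ ∩ Metric.closedBall p ρ) := by
  obtain ⟨d, rfl⟩ := Finsupp.mem_span_range_iff_exists_finsupp.1 hp
  refine convexHull_mono ?_ (d.support.sum_smul_mem_convexHull_image_pi_zmultiples xs hδ d)
  rintro _ ⟨b, hb, rfl⟩
  refine ⟨fun j => ?_, ?_⟩
  · rw [sum_smul_apply_of_biorthogonal hbio]
    split_ifs with hj
    exacts [(hb j hj).1, zero_mem _]
  · rw [Metric.mem_closedBall, dist_eq_norm, Finsupp.sum, ← Finset.sum_sub_distrib]
    calc ‖∑ i ∈ d.support, (b i • xs i - d i • xs i)‖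
        ≤ ∑ i ∈ d.support, dist (b i) (d i) * ‖xs i‖ := by
          refine (norm_sum_le _ _).trans_eq (Finset.sum_congr rfl fun i _ => ?_)
          rw [← sub_smul (M := StrongDual ℝ X), norm_smul, dist_eq_norm]
      _ ≤ ∑ i ∈ d.support, δ i * ‖xs i‖ :=
          Finset.sum_le_sum fun i hi => by gcongr; exact (hb i hi).2
      _ ≤ ρ := hδρ _

theorem closedBall_smul_subset_smul_polar {W : Set X} {R : ℝ} (hR : 0 < R)
    (hWR : W ⊆ Metric.closedBall 0 R) {g : StrongDual ℝ X} (hg : g ∈ StrongDual.polar ℝ W)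
    {a c : ℝ} (ha : 0 ≤ a) (hc : 0 < c) :
    Metric.closedBall (a • g) ((c - a) / R) ⊆ c • StrongDual.polar ℝ W := by
  intro f hf
  rw [Set.mem_smul_set_iff_inv_smul_mem₀ hc.ne', StrongDual.mem_polar_iff]
  intro z hz
  have hz' : ‖z‖ ≤ R := mem_closedBall_zero_iff.1 (hWR hz)
  have hfg : ‖f - a • g‖ ≤ (c - a) / R := mem_closedBall_iff_norm.1 hf
  have hfz : ‖f z‖ ≤ c := calc
    ‖f z‖ = ‖a * g z + (f - a • g) z‖ := by simp
    _ ≤ a * ‖g z‖ + ‖f - a • g‖ * ‖z‖ := by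
      refine (norm_add_le _ _).trans (add_le_add ?_ ((f - a • g).le_opNorm z))
      rw [norm_mul, Real.norm_of_nonneg ha]
    _ ≤ a * 1 + (c - a) / R * R := by
      gcongr
      · exact hg z hz
      · exact (norm_nonneg _).trans hfg
    _ = c := by field_simp; ring
  rw [smul_apply, smul_eq_mul, norm_mul, norm_inv, Real.norm_of_nonneg hc.le,
    inv_mul_le_iff₀ hc, mul_one]
  exact hfz

theorem smul_polar_subset_closure_convexHull {ι : Type*} [DecidableEq ι] {x : ι → X}
    {xs : ι → StrongDual ℝ X} (hbio : ∀ i j, xs i (x j) = if i = j then 1 else 0)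
    (hdense : closure (Submodule.span ℝ (Set.range xs) : Set (StrongDual ℝ X)) = Set.univ)
    {W : Set X} {R : ℝ} (hR : 0 < R) (hWR : W ⊆ Metric.closedBall 0 R)
    {a c : ℝ} (ha : 0 ≤ a) (hac : a < c) {δ : ι → ℝ} (hδ : ∀ i, 0 < δ i)
    (hδρ : ∀ s : Finset ι, ∑ i ∈ s, δ i * ‖xs i‖ ≤ (c - a) / (2 * R)) :
    a • StrongDual.polar ℝ W ⊆
      closure (convexHull ℝ (c • StrongDual.polar ℝ W ∩ gridFunctionals x δ)) := by
  rintro _ ⟨g, hg, rfl⟩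
  have hρ : 0 < (c - a) / (2 * R) := by apply div_pos <;> linarith
  refine Metric.mem_closure_iff.2 fun η hη => ?_
  obtain ⟨p, hp, hpg⟩ := Metric.mem_closure_iff.1 (hdense ▸ Set.mem_univ (a • g))
    (min η ((c - a) / (2 * R))) (lt_min hη hρ)
  refine ⟨p, convexHull_mono ?_ (mem_convexHull_gridFunctionals_of_mem_span hbio hδ hδρ hp),
    hpg.trans_le (min_le_left _ _)⟩
  rintro q ⟨hq, hqp⟩
  refine ⟨closedBall_smul_subset_smul_polar hR hWR hg ha (ha.trans_lt hac) ?_, hq⟩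
  rw [Metric.mem_closedBall] at hqp ⊢
  calc dist q (a • g) ≤ dist q p + dist p (a • g) := dist_triangle _ _ _
    _ ≤ (c - a) / (2 * R) + (c - a) / (2 * R) := by
      rw [dist_comm p]
      exact add_le_add hqp (hpg.le.trans (min_le_right _ _))
    _ = (c - a) / R := by field_simp; ring

theorem image_toWeakDual_smul_polar (c : ℝ) (W : Set X) :
    StrongDual.toWeakDual '' (c • StrongDual.polar ℝ W) = c • WeakDual.polar ℝ W := by
  rw [image_smul_set, StrongDual.toWeakDual.image_eq_preimage_symm]
  rfl

theorem isCompact_image_toWeakDual_smul_polar (c : ℝ) {W : Set X} (hW : W ∈ 𝓝 0) :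
    IsCompact (StrongDual.toWeakDual '' (c • StrongDual.polar ℝ W)) := by
  rw [image_toWeakDual_smul_polar]
  exact (WeakDual.isCompact_polar ℝ hW).smul c

theorem isClosed_image_toWeakDual_gridFunctionals {ι : Type*} (x : ι → X) (δ : ι → ℝ) :
    IsClosed (StrongDual.toWeakDual '' gridFunctionals x δ) := by
  rw [StrongDual.toWeakDual.image_eq_preimage_symm, gridFunctionals, Set.ofPred_forall,
    Set.preimage_iInter]
  refine isClosed_iInter fun i => ?_
  have hZ : IsClosed (AddSubgroup.zmultiples (δ i) : Set ℝ) := AddSubgroup.isClosed_of_discrete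
  exact hZ.preimage (WeakDual.eval_continuous (𝕜 := ℝ) (x i))

theorem image_toWeakDual_closure_convexHull_subset (S : Set (StrongDual ℝ X)) :
    StrongDual.toWeakDual '' closure (convexHull ℝ S) ⊆
      closure (convexHull ℝ (StrongDual.toWeakDual '' S)) := by
  have h := StrongDual.toWeakDual.toLinearMap.image_convexHull S
  rw [LinearEquiv.coe_coe] at h
  rw [← h]
  exact image_closure_subset_closure_image NormedSpace.Dual.toWeakDual_continuous

theorem closure_convexHull_image_toWeakDual_subset_smul_polar {S : Set (StrongDual ℝ X)}
    {c : ℝ} {W : Set X} (hW : W ∈ 𝓝 0) (hS : S ⊆ c • StrongDual.polar ℝ W) :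
    closure (convexHull ℝ (StrongDual.toWeakDual '' S)) ⊆
      StrongDual.toWeakDual '' (c • StrongDual.polar ℝ W) := by
  refine closure_minimal (convexHull_min (Set.image_mono hS) ?_)
    (isCompact_image_toWeakDual_smul_polar c hW).isClosed
  exact ((LinearMap.polar_AbsConvex W).2.smul c).linear_image StrongDual.toWeakDual.toLinearMap

theorem finite_image_apply_of_isCompact {ι : Type*} {x : ι → X} {δ : ι → ℝ}
    {F : Set (StrongDual ℝ X)} (hF : IsCompact (StrongDual.toWeakDual '' F))
    (hFδ : F ⊆ gridFunctionals x δ) (i : ι) :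
    ((fun f : StrongDual ℝ X => f (x i)) '' F).Finite := by
  have hK : IsCompact ((fun f : StrongDual ℝ X => f (x i)) '' F) := by
    have := hF.image (WeakDual.eval_continuous (x i))
    rwa [Set.image_image] at this
  refine hK.finite (IsDiscrete.mono (s := AddSubgroup.zmultiples (δ i))
    (SetLike.isDiscrete_iff_discreteTopology.2 inferInstance) ?_)
  rintro _ ⟨f, hf, rfl⟩
  exact hFδ hf i

end StrongDual

theorem exists_weakStarCompact_approximating_polar_general
    {X : Type*} [NormedAddCommGroup X] [NormedSpace ℝ X]
    (x : ℕ → X) (xs : ℕ → StrongDual ℝ X) (hbasis : IsShrinkingMBasis x xs)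
    (W : Set X) (hWbdd : Bornology.IsBounded W) (hW0 : (0 : X) ∈ interior W)
    (ε : ℝ) (hε : 0 < ε) :
    ∃ F : Set (StrongDual ℝ X),
      F ⊆ StrongDual.polar ℝ W ∧
      IsCompact (StrongDual.toWeakDual '' F) ∧
      StrongDual.toWeakDual '' ((1 / (1 + 4 * ε)) • StrongDual.polar ℝ W) ⊆
        closure (convexHull ℝ (StrongDual.toWeakDual '' F)) ∧
      closure (convexHull ℝ (StrongDual.toWeakDual '' F)) ⊆
        StrongDual.toWeakDual '' ((1 / (1 + ε)) • StrongDual.polar ℝ W) ∧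
      ∀ i : ℕ, ((fun f : StrongDual ℝ X => f (x i)) '' F).Finite := by
  obtain ⟨⟨hbio, -, -⟩, hdense⟩ := hbasis
  have hW : W ∈ 𝓝 (0 : X) := mem_interior_iff_mem_nhds.1 hW0
  obtain ⟨R, hR, hWR⟩ := hWbdd.subset_closedBall_lt 0 0
  have hlt : 1 / (1 + 4 * ε) < 1 / (1 + ε) :=
    one_div_lt_one_div_of_lt (by linarith) (by linarith)
  obtain ⟨δ, hδ, hδρ⟩ := exists_pos_forall_sum_mul_norm_le xs
    (div_pos (sub_pos.2 hlt) (mul_pos two_pos hR))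
  set F := (1 / (1 + ε)) • StrongDual.polar ℝ W ∩ gridFunctionals x δ
  have hFc : IsCompact (StrongDual.toWeakDual '' F) := by
    rw [Set.image_inter StrongDual.toWeakDual.injective]
    exact (isCompact_image_toWeakDual_smul_polar _ hW).inter_right
      (isClosed_image_toWeakDual_gridFunctionals x δ)
  have hc : ‖1 / (1 + ε)‖ ≤ 1 := by
    rw [Real.norm_of_nonneg (by positivity), div_le_one (by positivity)]
    linarith
  refine ⟨F, Set.inter_subset_left.trans ((LinearMap.polar_AbsConvex W).1 _ hc), hFc, ?_,
    closure_convexHull_image_toWeakDual_subset_smul_polar hW Set.inter_subset_left,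
    finite_image_apply_of_isCompact hFc Set.inter_subset_right⟩
  exact (Set.image_mono (smul_polar_subset_closure_convexHull hbio hdense hR hWR
    (by positivity) hlt hδ hδρ)).trans (image_toWeakDual_closure_convexHull_subset F)

/-- Given a CCB body `W` with `0 ∈ int W` in a Banach space with separable dual and a shrinking
M-basis, there is a weak-* compact `F ⊆ W°` with
`(1/(1+4ε)) W° ⊆ weak-* closed convex hull of F ⊆ (1/(1+ε)) W°` whose evaluations at each
basis vector `x i` form a finite set. -/
theorem exists_weakStarCompact_approximating_polar
    {X : Type*} [NormedAddCommGroup X] [NormedSpace ℝ X] [CompleteSpace X]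
    [TopologicalSpace.SeparableSpace (StrongDual ℝ X)]
    (x : ℕ → X) (xs : ℕ → StrongDual ℝ X) (hbasis : IsShrinkingMBasis x xs)
    (W : Set X) (hWclosed : IsClosed W) (hWconv : Convex ℝ W)
    (hWbdd : Bornology.IsBounded W) (hW0 : (0 : X) ∈ interior W)
    (ε : ℝ) (hε : 0 < ε) (hε' : ε < 1 / 8) :
    ∃ F : Set (StrongDual ℝ X),
      F ⊆ StrongDual.polar ℝ W ∧
      IsCompact (StrongDual.toWeakDual '' F) ∧
      StrongDual.toWeakDual '' ((1 / (1 + 4 * ε)) • StrongDual.polar ℝ W) ⊆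
        closure (convexHull ℝ (StrongDual.toWeakDual '' F)) ∧
      closure (convexHull ℝ (StrongDual.toWeakDual '' F)) ⊆
        StrongDual.toWeakDual '' ((1 / (1 + ε)) • StrongDual.polar ℝ W) ∧
      ∀ i : ℕ, ((fun f : StrongDual ℝ X => f (x i)) '' F).Finite :=
  exists_weakStarCompact_approximating_polar_general x xs hbasis W hWbdd hW0 ε hε
end

section
/- Let (X, ‖·‖) be a real Banach space whose norm is C^k-smooth, k ∈ ℕ ∪ {∞}, let (x_i*)_{i∈ℕ} be a sequence in X*, and let (c_i)_{i∈ℕ} be positive reals with Σ_i c_i ‖x_i*‖² < ∞. For ε > 0 define |||x|||² = ‖x‖² + ε Σ_{i=1}^∞ c_i (x_i*(x))². Then |||·||| is an equivalent norm on X, the function x ↦ |||x|||² is k-times continuously Fréchet differentiable on X ∖ {0}, |||·||| is C^k-smooth, and |||·||| → ‖·‖ uniformly on bounded sets as ε → 0⁺: namely 0 ≤ |||x||| − ‖x‖ ≤ ‖x‖·(√(1 + ε Σ_i c_i ‖x_i*‖²) − 1) for all x ∈ X. -/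
/-!
Writing `Tx = (√cᵢ · xᵢ*(x))ᵢ`, summability of `cᵢ‖xᵢ*‖²` makes `T` a bounded linear map
`X → ℓ²` with `‖Tx‖² ≤ S‖x‖²`, `S = Σᵢ cᵢ‖xᵢ*‖²`. Then `|||·|||` is the graph norm of `√ε T`:
`|||x|||` is the norm of `(x, √ε Tx)` in the `L²` product `X × ℓ²`, which gives the norm axioms,
and `‖√ε Tx‖²` is a continuous quadratic form on a Hilbert space, hence `C^∞`.
-/

open Filter Topology

/-- `N` is a norm on the real vector space `X`. -/
def IsNorm {X : Type*} [AddCommGroup X] [Module ℝ X] (N : X → ℝ) : Prop :=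
  (∀ x y : X, N (x + y) ≤ N x + N y) ∧
  (∀ (c : ℝ) (x : X), N (c • x) = |c| * N x) ∧
  (∀ x : X, N x = 0 → x = 0)

/-- `N` is equivalent to the canonical norm of `X`. -/
def IsEquivNorm {X : Type*} [NormedAddCommGroup X] [NormedSpace ℝ X] (N : X → ℝ) : Prop :=
  ∃ c C : ℝ, 0 < c ∧ 0 < C ∧ ∀ x : X, c * ‖x‖ ≤ N x ∧ N x ≤ C * ‖x‖

section WeightedL2

variable {X : Type*} [NormedAddCommGroup X] [NormedSpace ℝ X]
  {xs : ℕ → StrongDual ℝ X} {c : ℕ → ℝ}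

lemma sq_apply_le_opNorm_sq_mul (f : StrongDual ℝ X) (x : X) : f x ^ 2 ≤ ‖f‖ ^ 2 * ‖x‖ ^ 2 := by
  rw [← mul_pow, ← sq_abs, ← Real.norm_eq_abs]
  exact pow_le_pow_left₀ (norm_nonneg _) (f.le_opNorm x) 2

lemma summable_mul_apply_sq (hc : ∀ i, 0 ≤ c i) (hsum : Summable fun i => c i * ‖xs i‖ ^ 2)
    (x : X) : Summable fun i => c i * xs i x ^ 2 :=
  (hsum.mul_right (‖x‖ ^ 2)).of_nonneg_of_le (fun i => mul_nonneg (hc i) (sq_nonneg _))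
    fun i => by
      rw [mul_assoc]
      exact mul_le_mul_of_nonneg_left (sq_apply_le_opNorm_sq_mul _ _) (hc i)

lemma tsum_mul_apply_sq_le (hc : ∀ i, 0 ≤ c i) (hsum : Summable fun i => c i * ‖xs i‖ ^ 2)
    (x : X) : ∑' i, c i * xs i x ^ 2 ≤ (∑' i, c i * ‖xs i‖ ^ 2) * ‖x‖ ^ 2 := by
  rw [← tsum_mul_right]
  refine (summable_mul_apply_sq hc hsum x).tsum_le_tsum (fun i => ?_) (hsum.mul_right _)
  rw [mul_assoc]
  exact mul_le_mul_of_nonneg_left (sq_apply_le_opNorm_sq_mul _ _) (hc i)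

lemma norm_sqrt_mul_rpow_two {a : ℝ} (ha : 0 ≤ a) (b : ℝ) :
    ‖√a * b‖ ^ (2 : ENNReal).toReal = a * b ^ 2 := by
  rw [ENNReal.toReal_ofNat, Real.rpow_two, norm_mul, mul_pow, Real.norm_eq_abs, sq_abs,
    Real.norm_eq_abs, sq_abs, Real.sq_sqrt ha]

lemma memℓp_sqrt_mul_apply (hc : ∀ i, 0 ≤ c i) (hsum : Summable fun i => c i * ‖xs i‖ ^ 2)
    (x : X) : Memℓp (fun i => √(c i) * xs i x) 2 := by
  rw [memℓp_gen_iff (by norm_num)]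
  simpa only [norm_sqrt_mul_rpow_two (hc _)] using summable_mul_apply_sq hc hsum x

noncomputable def weightedCoords (hc : ∀ i, 0 ≤ c i)
    (hsum : Summable fun i => c i * ‖xs i‖ ^ 2) (x : X) : lp (fun _ : ℕ => ℝ) 2 :=
  ⟨fun i => √(c i) * xs i x, memℓp_sqrt_mul_apply hc hsum x⟩

lemma norm_weightedCoords_sq (hc : ∀ i, 0 ≤ c i) (hsum : Summable fun i => c i * ‖xs i‖ ^ 2)
    (x : X) : ‖weightedCoords hc hsum x‖ ^ 2 = ∑' i, c i * xs i x ^ 2 := by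
  have h := (lp.norm_rpow_eq_tsum (by norm_num) (weightedCoords hc hsum x)).trans
    (tsum_congr fun i => norm_sqrt_mul_rpow_two (hc i) (xs i x))
  rwa [ENNReal.toReal_ofNat, Real.rpow_two] at h

lemma norm_weightedCoords_sq_le (hc : ∀ i, 0 ≤ c i)
    (hsum : Summable fun i => c i * ‖xs i‖ ^ 2) (x : X) :
    ‖weightedCoords hc hsum x‖ ^ 2 ≤ (∑' i, c i * ‖xs i‖ ^ 2) * ‖x‖ ^ 2 :=
  (norm_weightedCoords_sq hc hsum x).trans_le (tsum_mul_apply_sq_le hc hsum x)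

noncomputable def weightedL2 (hc : ∀ i, 0 ≤ c i) (hsum : Summable fun i => c i * ‖xs i‖ ^ 2) :
    X →L[ℝ] lp (fun _ : ℕ => ℝ) 2 :=
  LinearMap.mkContinuous
    { toFun := weightedCoords hc hsum
      map_add' := fun x y => lp.ext <| funext fun i => by
        simp only [weightedCoords, map_add, mul_add, lp.coeFn_add, Pi.add_apply]
      map_smul' := fun t x => lp.ext <| funext fun i => by
        simp only [weightedCoords, map_smul, smul_eq_mul, lp.coeFn_smul, Pi.smul_apply,
          RingHom.id_apply]
        ring }
    √(∑' i, c i * ‖xs i‖ ^ 2)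
    fun x => by
      rw [← Real.sqrt_sq (norm_nonneg x), ← Real.sqrt_mul (tsum_nonneg fun i =>
        mul_nonneg (hc i) (sq_nonneg _))]
      exact Real.le_sqrt_of_sq_le (norm_weightedCoords_sq_le hc hsum x)

lemma norm_weightedL2_sq (hc : ∀ i, 0 ≤ c i) (hsum : Summable fun i => c i * ‖xs i‖ ^ 2)
    (x : X) : ‖weightedL2 hc hsum x‖ ^ 2 = ∑' i, c i * xs i x ^ 2 :=
  norm_weightedCoords_sq hc hsum x

end WeightedL2

section GraphNorm

variable {X F : Type*} [NormedAddCommGroup X] [NormedSpace ℝ X]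

noncomputable def graphNorm [NormedAddCommGroup F] [NormedSpace ℝ F] (L : X →L[ℝ] F) (x : X) :
    ℝ :=
  √(‖x‖ ^ 2 + ‖L x‖ ^ 2)

section Normed

variable [NormedAddCommGroup F] [NormedSpace ℝ F] (L : X →L[ℝ] F)

lemma graphNorm_eq_norm_toLp (x : X) : graphNorm L x = ‖WithLp.toLp 2 (x, L x)‖ :=
  (WithLp.prod_norm_eq_of_L2 (WithLp.toLp 2 (x, L x))).symm

lemma graphNorm_sq (x : X) : graphNorm L x ^ 2 = ‖x‖ ^ 2 + ‖L x‖ ^ 2 :=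
  Real.sq_sqrt (add_nonneg (sq_nonneg _) (sq_nonneg _))

lemma norm_le_graphNorm (x : X) : ‖x‖ ≤ graphNorm L x :=
  Real.le_sqrt_of_sq_le (le_add_of_nonneg_right (sq_nonneg _))

lemma graphNorm_le {K : ℝ} (hK : 0 ≤ K) (hL : ∀ x, ‖L x‖ ^ 2 ≤ K * ‖x‖ ^ 2) (x : X) :
    graphNorm L x ≤ √(1 + K) * ‖x‖ :=
  calc graphNorm L x ≤ √((1 + K) * ‖x‖ ^ 2) := Real.sqrt_le_sqrt (by linarith [hL x])
    _ = √(1 + K) * ‖x‖ := by rw [Real.sqrt_mul (by linarith), Real.sqrt_sq (norm_nonneg x)]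

lemma isNorm_graphNorm : IsNorm (graphNorm L) := by
  refine ⟨fun x y => ?_, fun t x => ?_, fun x hx => ?_⟩
  · simp only [graphNorm_eq_norm_toLp, map_add]
    exact norm_add_le (WithLp.toLp 2 (x, L x)) (WithLp.toLp 2 (y, L y))
  · simp only [graphNorm_eq_norm_toLp, map_smul, ← Real.norm_eq_abs, ← norm_smul]
    rfl
  · exact norm_le_zero_iff.1 ((norm_le_graphNorm L x).trans_eq hx)

end Normed

variable [NormedAddCommGroup F] [InnerProductSpace ℝ F] (L : X →L[ℝ] F) {k : ℕ∞}

lemma contDiffOn_graphNorm_sq (hsmooth : ContDiffOn ℝ k (fun z : X => ‖z‖) {(0 : X)}ᶜ) :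
    ContDiffOn ℝ k (fun x => graphNorm L x ^ 2) {(0 : X)}ᶜ := by
  simp only [graphNorm_sq]
  exact (hsmooth.pow 2).add ((contDiff_norm_sq ℝ).comp L.contDiff).contDiffOn

lemma contDiffOn_graphNorm (hsmooth : ContDiffOn ℝ k (fun z : X => ‖z‖) {(0 : X)}ᶜ) :
    ContDiffOn ℝ k (graphNorm L) {(0 : X)}ᶜ :=
  ((contDiffOn_graphNorm_sq L hsmooth).congr fun x _ => (graphNorm_sq L x).symm).sqrt
    fun _ hx => (add_pos_of_pos_of_nonneg (pow_pos (norm_pos_iff.2 hx) 2) (sq_nonneg _)).ne'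

end GraphNorm

theorem quadratic_perturbation_of_smooth_norm_general
    {X : Type*} [NormedAddCommGroup X] [NormedSpace ℝ X]
    (k : ℕ∞)
    (hsmooth : ContDiffOn ℝ k (fun z : X => ‖z‖) {(0 : X)}ᶜ)
    (xs : ℕ → StrongDual ℝ X)
    (c : ℕ → ℝ) (hc : ∀ i : ℕ, 0 < c i)
    (hsum : Summable fun i : ℕ => c i * ‖xs i‖ ^ 2)
    (ε : ℝ) (hε : 0 < ε)
    (N : X → ℝ)
    (hN : ∀ z : X, N z = Real.sqrt (‖z‖ ^ 2 + ε * ∑' i : ℕ, c i * (xs i z) ^ 2)) :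
    IsNorm N ∧ IsEquivNorm N ∧
      ContDiffOn ℝ k (fun z : X => N z ^ 2) {(0 : X)}ᶜ ∧
      ContDiffOn ℝ k N {(0 : X)}ᶜ ∧
      ∀ z : X, 0 ≤ N z - ‖z‖ ∧
        N z - ‖z‖ ≤ ‖z‖ * (Real.sqrt (1 + ε * ∑' i : ℕ, c i * ‖xs i‖ ^ 2) - 1) := by
  set S := ∑' i, c i * ‖xs i‖ ^ 2
  have hc' : ∀ i, 0 ≤ c i := fun i => (hc i).le
  set L := √ε • weightedL2 hc' hsum
  have hL : ∀ z, ‖L z‖ ^ 2 = ε * ∑' i, c i * xs i z ^ 2 := fun z => by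
    rw [smul_apply, norm_smul, mul_pow, Real.norm_eq_abs, sq_abs, Real.sq_sqrt hε.le,
      norm_weightedL2_sq]
  have hLS : ∀ z, ‖L z‖ ^ 2 ≤ ε * S * ‖z‖ ^ 2 := fun z => by
    rw [hL, mul_assoc]
    exact mul_le_mul_of_nonneg_left (tsum_mul_apply_sq_le hc' hsum z) hε.le
  have hεS : 0 ≤ ε * S := mul_nonneg hε.le (tsum_nonneg fun i => mul_nonneg (hc' i) (sq_nonneg _))
  obtain rfl : N = graphNorm L := funext fun z => by rw [hN, ← hL]; rfl
  have hup := graphNorm_le L hεS hLS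
  refine ⟨isNorm_graphNorm L,
    ⟨1, √(1 + ε * S), one_pos, Real.sqrt_pos.2 (by linarith),
      fun z => ⟨(one_mul _).trans_le (norm_le_graphNorm L z), hup z⟩⟩,
    contDiffOn_graphNorm_sq L hsmooth, contDiffOn_graphNorm L hsmooth,
    fun z => ⟨sub_nonneg.2 (norm_le_graphNorm L z), by linarith [hup z]⟩⟩

/-- The quadratic perturbation `|||x|||² = ‖x‖² + ε Σᵢ cᵢ (xᵢ*(x))²` of a `C^k`-smooth norm
is an equivalent norm, `|||·|||²` is `C^k`-smooth away from the origin, `|||·|||` is a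
`C^k`-smooth norm, and it approximates `‖·‖` uniformly on bounded sets as `ε → 0⁺`. -/
theorem quadratic_perturbation_of_smooth_norm
    {X : Type*} [NormedAddCommGroup X] [NormedSpace ℝ X] [CompleteSpace X]
    (k : ℕ∞)
    (hsmooth : ContDiffOn ℝ k (fun z : X => ‖z‖) {(0 : X)}ᶜ)
    (xs : ℕ → StrongDual ℝ X)
    (c : ℕ → ℝ) (hc : ∀ i : ℕ, 0 < c i)
    (hsum : Summable fun i : ℕ => c i * ‖xs i‖ ^ 2)
    (ε : ℝ) (hε : 0 < ε)
    (N : X → ℝ)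
    (hN : ∀ z : X, N z = Real.sqrt (‖z‖ ^ 2 + ε * ∑' i : ℕ, c i * (xs i z) ^ 2)) :
    IsNorm N ∧ IsEquivNorm N ∧
      ContDiffOn ℝ k (fun z : X => N z ^ 2) {(0 : X)}ᶜ ∧
      ContDiffOn ℝ k N {(0 : X)}ᶜ ∧
      ∀ z : X, 0 ≤ N z - ‖z‖ ∧
        N z - ‖z‖ ≤ ‖z‖ * (Real.sqrt (1 + ε * ∑' i : ℕ, c i * ‖xs i‖ ^ 2) - 1) :=
  quadratic_perturbation_of_smooth_norm_general k hsmooth xs c hc hsum ε hε N hN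
end

section
/- Let (X, ‖·‖) be a real Banach space, let {(x_i, x_i*)}_{i∈ℕ} be a biorthogonal system (x_i*(x_j) = 1 if i = j and 0 otherwise), let (c_i) be positive reals with Σ_i c_i ‖x_i*‖² < ∞, let ε > 0, and define the equivalent norm |||x|||² = ‖x‖² + ε Σ_{i=1}^∞ c_i (x_i*(x))². Let n ∈ ℕ and E = span(x_1, …, x_n). Then for every x ∈ X there exists exactly one point a ∈ E with |||x − a||| = inf{|||x − e||| : e ∈ E}; that is, the nearest-point (metric projection) map from (X, |||·|||) onto E is well defined and single-valued. -/
/-!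
Since `E` is finite-dimensional and `|||w||| ≥ ‖w‖`, the continuous function `e ↦ |||z - e|||` on
`E` is coercive and attains its infimum. For uniqueness, `‖·‖²` is midpoint convex while the
quadratic part obeys the parallelogram law, so for `u - v ∈ E`
`|||(u + v)/2|||² ≤ (|||u|||² + |||v|||²)/2 - (ε/4) Σᵢ cᵢ xᵢ*(u - v)²`;
the sum is positive when `u ≠ v`, because `x₁*, …, xₙ*` separate the points of `E`. Two distinct
nearest points `a, b` would then make their midpoint strictly nearer.
-/

open Filter

lemma apply_eq_ciInf_iff {ι α : Type*} [ConditionallyCompleteLattice α] {f : ι → α}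
    (hf : BddBelow (Set.range f)) (i : ι) : f i = ⨅ j, f j ↔ ∀ j, f i ≤ f j := by
  have : Nonempty ι := ⟨i⟩
  exact ⟨fun h j => h ▸ ciInf_le hf j, fun h => le_antisymm (le_ciInf h) (ciInf_le hf i)⟩

section Biorthogonal

variable {X : Type*} [NormedAddCommGroup X] [NormedSpace ℝ X]

lemma sum_apply_smul_eq_of_mem_span {ι : Type*} [Fintype ι] [DecidableEq ι] {x : ι → X}
    {xs : ι → StrongDual ℝ X} (hbi : ∀ i j, xs i (x j) = if i = j then 1 else 0) {w : X}
    (hw : w ∈ Submodule.span ℝ (Set.range x)) : ∑ i, xs i w • x i = w := by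
  let P : X →ₗ[ℝ] X := ∑ i, LinearMap.smulRight (xs i : X →ₗ[ℝ] ℝ) (x i)
  have hP : Set.EqOn P (LinearMap.id (R := ℝ)) (Set.range x) := by
    rintro _ ⟨j, rfl⟩
    simp [P, hbi]
  simpa [P] using LinearMap.eqOn_span hP hw

lemma exists_apply_ne_zero_of_mem_span {ι : Type*} [Fintype ι] [DecidableEq ι] {x : ι → X}
    {xs : ι → StrongDual ℝ X} (hbi : ∀ i j, xs i (x j) = if i = j then 1 else 0) {w : X}
    (hw : w ∈ Submodule.span ℝ (Set.range x)) (hw0 : w ≠ 0) : ∃ i, xs i w ≠ 0 := by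
  by_contra! h
  exact hw0 (by simpa [h] using (sum_apply_smul_eq_of_mem_span hbi hw).symm)

end Biorthogonal

section WeightedSqSum

variable {X : Type*} [NormedAddCommGroup X] [NormedSpace ℝ X]

noncomputable def weightedSqSum (c : ℕ → ℝ) (xs : ℕ → StrongDual ℝ X) (w : X) : ℝ :=
  ∑' i, c i * (xs i w) ^ 2

variable {c : ℕ → ℝ} {xs : ℕ → StrongDual ℝ X}

lemma weighted_sq_apply_le (hc : ∀ i, 0 ≤ c i) (i : ℕ) (w : X) :
    c i * (xs i w) ^ 2 ≤ c i * ‖xs i‖ ^ 2 * ‖w‖ ^ 2 := by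
  have h : |xs i w| ≤ ‖xs i‖ * ‖w‖ := (xs i).le_opNorm w
  calc c i * (xs i w) ^ 2 = c i * |xs i w| ^ 2 := by rw [sq_abs]
    _ ≤ c i * (‖xs i‖ * ‖w‖) ^ 2 := by gcongr; exact hc i
    _ = c i * ‖xs i‖ ^ 2 * ‖w‖ ^ 2 := by ring

lemma summable_weighted_sq (hc : ∀ i, 0 ≤ c i) (hsum : Summable fun i => c i * ‖xs i‖ ^ 2)
    (w : X) : Summable fun i => c i * (xs i w) ^ 2 :=
  (hsum.mul_right _).of_nonneg_of_le (fun i => by have := hc i; positivity)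
    (fun i => weighted_sq_apply_le hc i w)

lemma weightedSqSum_nonneg (hc : ∀ i, 0 ≤ c i) (w : X) : 0 ≤ weightedSqSum c xs w :=
  tsum_nonneg fun i => by have := hc i; positivity

lemma weightedSqSum_pos (hc : ∀ i, 0 < c i) (hsum : Summable fun i => c i * ‖xs i‖ ^ 2)
    {w : X} {i : ℕ} (hi : xs i w ≠ 0) : 0 < weightedSqSum c xs w :=
  calc 0 < c i * (xs i w) ^ 2 := by have := hc i; positivity
    _ ≤ weightedSqSum c xs w :=
      (summable_weighted_sq (fun j => (hc j).le) hsum w).le_tsum i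
        fun j _ => by have := hc j; positivity

lemma continuous_weightedSqSum (hc : ∀ i, 0 ≤ c i)
    (hsum : Summable fun i => c i * ‖xs i‖ ^ 2) : Continuous (weightedSqSum c xs) := by
  refine continuous_iff_continuousAt.2 fun w => ContinuousOn.continuousAt ?_
    (Metric.ball_mem_nhds w zero_lt_one)
  refine continuousOn_tsum (fun i => by fun_prop) (hsum.mul_right ((‖w‖ + 1) ^ 2))
    fun i v hv => ?_
  have hv : ‖v‖ ≤ ‖w‖ + 1 := by
    linarith [norm_le_norm_add_norm_sub' v w, mem_ball_iff_norm.1 hv]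
  rw [Real.norm_of_nonneg (by have := hc i; positivity)]
  calc c i * (xs i v) ^ 2 ≤ c i * ‖xs i‖ ^ 2 * ‖v‖ ^ 2 := weighted_sq_apply_le hc i v
    _ ≤ c i * ‖xs i‖ ^ 2 * (‖w‖ + 1) ^ 2 := by have := hc i; gcongr

lemma weightedSqSum_midpoint (hc : ∀ i, 0 ≤ c i) (hsum : Summable fun i => c i * ‖xs i‖ ^ 2)
    (u v : X) : weightedSqSum c xs ((2 : ℝ)⁻¹ • (u + v)) =
      (weightedSqSum c xs u + weightedSqSum c xs v) / 2 - weightedSqSum c xs (u - v) / 4 := by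
  have hs := summable_weighted_sq hc hsum
  unfold weightedSqSum
  rw [← (hs u).tsum_add (hs v), ← tsum_div_const, ← tsum_div_const,
    ← ((hs u).add (hs v)).div_const 2 |>.tsum_sub ((hs (u - v)).div_const 4)]
  congr 1 with i
  simp only [map_smul, map_add, map_sub, smul_eq_mul]
  ring

end WeightedSqSum

section Renorm

variable {X : Type*} [NormedAddCommGroup X] [NormedSpace ℝ X]

lemma sq_norm_midpoint_le (u v : X) :
    ‖(2 : ℝ)⁻¹ • (u + v)‖ ^ 2 ≤ (‖u‖ ^ 2 + ‖v‖ ^ 2) / 2 := by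
  have h : ‖(2 : ℝ)⁻¹ • (u + v)‖ ≤ (‖u‖ + ‖v‖) / 2 := by
    rw [norm_smul, norm_inv, Real.norm_two, inv_mul_eq_div]
    gcongr
    exact norm_add_le u v
  nlinarith [norm_nonneg ((2 : ℝ)⁻¹ • (u + v)), sq_nonneg (‖u‖ - ‖v‖)]

noncomputable def renorm (ε : ℝ) (c : ℕ → ℝ) (xs : ℕ → StrongDual ℝ X) (w : X) : ℝ :=
  √(‖w‖ ^ 2 + ε * weightedSqSum c xs w)

variable {ε : ℝ} {c : ℕ → ℝ} {xs : ℕ → StrongDual ℝ X}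

lemma renorm_nonneg (w : X) : 0 ≤ renorm ε c xs w :=
  Real.sqrt_nonneg _

lemma renorm_sq (hε : 0 ≤ ε) (hc : ∀ i, 0 ≤ c i) (w : X) :
    renorm ε c xs w ^ 2 = ‖w‖ ^ 2 + ε * weightedSqSum c xs w :=
  Real.sq_sqrt (by have := weightedSqSum_nonneg (xs := xs) hc w; positivity)

lemma norm_le_renorm (hε : 0 ≤ ε) (hc : ∀ i, 0 ≤ c i) (w : X) : ‖w‖ ≤ renorm ε c xs w :=
  Real.le_sqrt_of_sq_le (by have := weightedSqSum_nonneg (xs := xs) hc w; nlinarith)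

lemma continuous_renorm (hc : ∀ i, 0 ≤ c i) (hsum : Summable fun i => c i * ‖xs i‖ ^ 2) :
    Continuous (renorm ε c xs) := by
  have := continuous_weightedSqSum hc hsum
  unfold renorm
  fun_prop

lemma renorm_sq_midpoint_lt (hε : 0 < ε) (hc : ∀ i, 0 ≤ c i)
    (hsum : Summable fun i => c i * ‖xs i‖ ^ 2) {u v : X}
    (huv : 0 < weightedSqSum c xs (u - v)) :
    renorm ε c xs ((2 : ℝ)⁻¹ • (u + v)) ^ 2 < (renorm ε c xs u ^ 2 + renorm ε c xs v ^ 2) / 2 := by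
  simp only [renorm_sq hε.le hc, weightedSqSum_midpoint hc hsum]
  nlinarith [sq_norm_midpoint_le u v, mul_pos hε huv]

end Renorm

section NearestPoint

variable {X : Type*} [NormedAddCommGroup X] [NormedSpace ℝ X] {g : X → ℝ}
  {E : Submodule ℝ X}

lemma Submodule.exists_forall_le_sub_of_norm_le [FiniteDimensional ℝ E] (hg : Continuous g)
    (hle : ∀ w, ‖w‖ ≤ g w) (z : X) : ∃ a : E, ∀ e : E, g (z - a) ≤ g (z - e) := by
  refine Continuous.exists_forall_le (by fun_prop) ?_
  refine tendsto_atTop_mono (fun e => ?_)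
    (tendsto_atTop_add_const_right _ (-‖z‖) tendsto_norm_cocompact_atTop)
  calc ‖e‖ + -‖z‖ ≤ ‖z - (e : X)‖ := by
        rw [norm_sub_rev]; linarith [norm_sub_norm_le (e : X) z, E.coe_norm e]
    _ ≤ g (z - e) := hle _

lemma Submodule.eq_of_forall_le_sub_of_sq_midpoint_lt (hg : ∀ w, 0 ≤ g w)
    (hmid : ∀ u v, u - v ∈ E → u ≠ v → g ((2 : ℝ)⁻¹ • (u + v)) ^ 2 < (g u ^ 2 + g v ^ 2) / 2)
    {z : X} {a b : E} (ha : ∀ e : E, g (z - a) ≤ g (z - e))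
    (hb : ∀ e : E, g (z - b) ≤ g (z - e)) : a = b := by
  by_contra hab
  have hd : g (z - a) = g (z - b) := le_antisymm (ha b) (hb a)
  let m : E := (2 : ℝ)⁻¹ • (a + b)
  have hzm : z - (m : X) = (2 : ℝ)⁻¹ • ((z - a) + (z - b)) := by
    simp only [m, Submodule.coe_smul, Submodule.coe_add]
    module
  have hlt := hmid (z - a) (z - b) (by rw [sub_sub_sub_cancel_left]; exact E.sub_mem b.2 a.2)
    fun h => hab (Subtype.ext (sub_right_injective h))
  rw [← hzm, hd] at hlt
  nlinarith [hb m, hg (z - b)]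

end NearestPoint

theorem existsUnique_nearest_point_general
    {X : Type*} [NormedAddCommGroup X] [NormedSpace ℝ X]
    (x : ℕ → X) (xs : ℕ → StrongDual ℝ X)
    (hbi : ∀ i j : ℕ, xs i (x j) = if i = j then 1 else 0)
    (c : ℕ → ℝ) (hc : ∀ i : ℕ, 0 < c i)
    (hsum : Summable fun i : ℕ => c i * ‖xs i‖ ^ 2)
    (ε : ℝ) (hε : 0 < ε)
    (N : X → ℝ)
    (hN : ∀ z : X, N z = Real.sqrt (‖z‖ ^ 2 + ε * ∑' i : ℕ, c i * (xs i z) ^ 2))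
    (n : ℕ) (z : X) :
    ∃! a : X,
      a ∈ Submodule.span ℝ (Set.range fun i : Fin n => x i) ∧
      N (z - a) =
        ⨅ e : ↥(Submodule.span ℝ (Set.range fun i : Fin n => x i)), N (z - (e : X)) := by
  obtain rfl : N = renorm ε c xs := funext hN
  set E := Submodule.span ℝ (Set.range fun i : Fin n => x i)
  have hc₀ : ∀ i, 0 ≤ c i := fun i => (hc i).le
  have hbdd : BddBelow (Set.range fun e : E => renorm ε c xs (z - e)) :=
    ⟨0, by rintro _ ⟨e, rfl⟩; exact renorm_nonneg _⟩
  have hmid (u v : X) (huv : u - v ∈ E) (hne : u ≠ v) :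
      renorm ε c xs ((2 : ℝ)⁻¹ • (u + v)) ^ 2 <
        (renorm ε c xs u ^ 2 + renorm ε c xs v ^ 2) / 2 := by
    obtain ⟨i, hi⟩ := exists_apply_ne_zero_of_mem_span (xs := fun i : Fin n => xs i)
      (fun i j => by simp [hbi, Fin.val_inj]) huv (sub_ne_zero.2 hne)
    exact renorm_sq_midpoint_lt hε hc₀ hsum (weightedSqSum_pos hc hsum hi)
  have : FiniteDimensional ℝ E := FiniteDimensional.span_of_finite ℝ (Set.finite_range _)
  obtain ⟨a, ha⟩ := E.exists_forall_le_sub_of_norm_le (continuous_renorm hc₀ hsum)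
    (norm_le_renorm hε.le hc₀) z
  refine ⟨a, ⟨a.2, (apply_eq_ciInf_iff hbdd a).2 ha⟩, fun b ⟨hb, hbmin⟩ => ?_⟩
  have hb' := (apply_eq_ciInf_iff hbdd ⟨b, hb⟩).1 hbmin
  exact congrArg Subtype.val
    (E.eq_of_forall_le_sub_of_sq_midpoint_lt renorm_nonneg hmid hb' ha)

/-- For the equivalent norm `|||x|||² = ‖x‖² + ε Σᵢ cᵢ (xᵢ*(x))²` built from a biorthogonal
system, every point of `X` has exactly one nearest point in `E = span(x_1, …, x_n)`. -/
theorem existsUnique_nearest_point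
    {X : Type*} [NormedAddCommGroup X] [NormedSpace ℝ X] [CompleteSpace X]
    (x : ℕ → X) (xs : ℕ → StrongDual ℝ X)
    (hbi : ∀ i j : ℕ, xs i (x j) = if i = j then 1 else 0)
    (c : ℕ → ℝ) (hc : ∀ i : ℕ, 0 < c i)
    (hsum : Summable fun i : ℕ => c i * ‖xs i‖ ^ 2)
    (ε : ℝ) (hε : 0 < ε)
    (N : X → ℝ)
    (hN : ∀ z : X, N z = Real.sqrt (‖z‖ ^ 2 + ε * ∑' i : ℕ, c i * (xs i z) ^ 2))
    (n : ℕ) (z : X) :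
    ∃! a : X,
      a ∈ Submodule.span ℝ (Set.range fun i : Fin n => x i) ∧
      N (z - a) =
        ⨅ e : ↥(Submodule.span ℝ (Set.range fun i : Fin n => x i)), N (z - (e : X)) :=
  existsUnique_nearest_point_general x xs hbi c hc hsum ε hε N hN n z
end

section
/- Let (X, ‖·‖) be a real Banach space whose norm is C^k-smooth with k ∈ {2, 3, …, ∞}, let {(x_i, x_i*)}_{i∈ℕ} be a biorthogonal system (x_i*(x_j) = 1 if i = j and 0 otherwise), let (c_i) be positive reals with Σ_i c_i ‖x_i*‖² < ∞, let ε > 0, and define |||x|||² = ‖x‖² + ε Σ_{i=1}^∞ c_i (x_i*(x))². Fix n ∈ ℕ and x ∈ X, and define h : ℝⁿ → ℝ by h(a_1, …, a_n) = |||x + Σ_{i=1}^n a_i x_i|||². Then at every point a ∈ ℝⁿ with x + Σ_{i=1}^n a_i x_i ≠ 0, the function h is twice continuously differentiable and its Hessian matrix (∂²h/∂a_i∂a_j)_{i,j=1,…,n} is positive definite. -/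
/-!
By biorthogonality only the first `n` functionals `xᵢ*` see the coefficients, so
`h b = ‖z + ∑ bᵢ xᵢ‖² + ε ∑_{j<n} c_j (x_j*(z) + b_j)² + const`. Along a line `a + t v` the first
term is convex and the second is `ε (∑ c_j v_j²) t²` plus an affine function of `t`. Hence
`t ↦ h (a + t v) - ε (∑ c_j v_j²) t²` is convex, and since `h` is `C²` near `a`, its second
derivative in the direction `v` is at least `2 ε ∑ c_j v_j² > 0`.
-/

open Filter Topology

theorem ContDiffAt.eventually_comp_add_smul {E : Type*} [NormedAddCommGroup E] [NormedSpace ℝ E]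
    {f : E → ℝ} {a : E} (hf : ContDiffAt ℝ 2 f a) (v : E) :
    ∀ᶠ t : ℝ in 𝓝 0, ContDiffAt ℝ 2 f (a + t • v) := by
  have hcont : Tendsto (fun t : ℝ => a + t • v) (𝓝 0) (𝓝 a) := by
    have : Continuous fun t : ℝ => a + t • v := by fun_prop
    simpa using this.tendsto 0
  exact hcont.eventually (hf.eventually (by simp))

theorem hasDerivAt_deriv_comp_add_smul {E : Type*} [NormedAddCommGroup E] [NormedSpace ℝ E]
    {f : E → ℝ} {a : E} (hf : ContDiffAt ℝ 2 f a) (v : E) :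
    HasDerivAt (deriv fun t : ℝ => f (a + t • v)) (fderiv ℝ (fderiv ℝ f) a v v) 0 := by
  have hline : ∀ t : ℝ, HasDerivAt (fun t : ℝ => a + t • v) v t := fun t => by
    simpa using ((hasDerivAt_id t).smul_const v).const_add a
  have hderiv : deriv (fun t : ℝ => f (a + t • v)) =ᶠ[𝓝 0] fun t => fderiv ℝ f (a + t • v) v := by
    filter_upwards [hf.eventually_comp_add_smul v] with t ht
    exact ((ht.differentiableAt two_ne_zero).hasFDerivAt.comp_hasDerivAt t (hline t)).deriv
  have hf' : HasFDerivAt (fderiv ℝ f) (fderiv ℝ (fderiv ℝ f) a) (a + (0 : ℝ) • v) := by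
    simpa using ((hf.fderiv_right (m := 1) le_rfl).differentiableAt one_ne_zero).hasFDerivAt
  exact ((ContinuousLinearMap.apply ℝ ℝ v).hasFDerivAt.comp_hasDerivAt 0
    (hf'.comp_hasDerivAt 0 (hline 0))).congr_of_eventuallyEq hderiv

theorem ConvexOn.nonneg_of_hasDerivAt_deriv {g : ℝ → ℝ} {s : Set ℝ} {t₀ g'' : ℝ}
    (hg : ConvexOn ℝ s g) (hs : s ∈ 𝓝 t₀) (hd : ∀ᶠ t in 𝓝 t₀, DifferentiableAt ℝ g t)
    (hg'' : HasDerivAt (deriv g) g'' t₀) : 0 ≤ g'' := by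
  obtain ⟨δ, hδ, hball⟩ := Metric.mem_nhds_iff.1 (inter_mem hs hd)
  have hmono : MonotoneOn (deriv g) (Metric.ball t₀ δ) :=
    (hg.subset (fun t ht => (hball ht).1) (convex_ball _ _)).monotoneOn_deriv
      fun t ht => (hball ht).2
  exact hg''.hasDerivWithinAt.nonneg_of_monotoneOn
    ((PerfectSpace.univ_preperfect t₀ trivial).nhds_inter (Metric.ball_mem_nhds t₀ hδ))
    (hmono.mono Set.inter_subset_left)

theorem ContDiffAt.two_mul_le_fderiv_fderiv {E : Type*} [NormedAddCommGroup E] [NormedSpace ℝ E]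
    {f : E → ℝ} {a v : E} {κ : ℝ} {s : Set ℝ} (hf : ContDiffAt ℝ 2 f a) (hs : s ∈ 𝓝 0)
    (hconv : ConvexOn ℝ s fun t => f (a + t • v) - κ * t ^ 2) :
    2 * κ ≤ fderiv ℝ (fderiv ℝ f) a v v := by
  have hd : ∀ᶠ t in 𝓝 (0 : ℝ), DifferentiableAt ℝ (fun t : ℝ => f (a + t • v)) t := by
    filter_upwards [hf.eventually_comp_add_smul v] with t ht
    exact (ht.differentiableAt two_ne_zero).comp t
      ((differentiableAt_id.smul_const v).const_add a)
  have hsq : ∀ t : ℝ, HasDerivAt (fun t : ℝ => κ * t ^ 2) (2 * κ * t) t := fun t => by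
    simpa [mul_comm, mul_left_comm, mul_assoc] using (hasDerivAt_pow 2 t).const_mul κ
  have hderiv : deriv (fun t => f (a + t • v) - κ * t ^ 2) =ᶠ[𝓝 0]
      fun t => deriv (fun t => f (a + t • v)) t - 2 * κ * t := by
    filter_upwards [hd] with t ht
    exact (ht.hasDerivAt.sub (hsq t)).deriv
  have h2 := ((hasDerivAt_deriv_comp_add_smul hf v).sub
    ((hasDerivAt_id 0).const_mul (2 * κ))).congr_of_eventuallyEq hderiv
  have := hconv.nonneg_of_hasDerivAt_deriv hs
    (hd.mono fun t ht => ht.sub (hsq t).differentiableAt) h2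
  linarith

theorem Matrix.posDef_hessian_of_isSymmSndFDerivAt {ι : Type*} [Fintype ι] [DecidableEq ι]
    {f : (ι → ℝ) → ℝ} {a : ι → ℝ} (hsymm : IsSymmSndFDerivAt ℝ f a)
    (hpos : ∀ v, v ≠ 0 → 0 < fderiv ℝ (fderiv ℝ f) a v v) :
    (Matrix.of fun i j : ι => iteratedFDeriv ℝ 2 f a ![Pi.single i 1, Pi.single j 1]).PosDef := by
  have hM : (Matrix.of fun i j : ι => iteratedFDeriv ℝ 2 f a ![Pi.single i 1, Pi.single j 1]) =
      LinearMap.toMatrix₂' ℝ (fderiv ℝ (fderiv ℝ f) a).toLinearMap₁₂ := by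
    ext i j
    simp [iteratedFDeriv_two_apply, LinearMap.toMatrix₂'_apply]
  rw [hM]
  refine .of_dotProduct_mulVec_pos ?_ fun v hv => ?_
  · ext i j
    simp [LinearMap.toMatrix₂'_apply, hsymm (Pi.single i 1)]
  · rw [star_trivial, ← Matrix.toLinearMap₂'_apply', Matrix.toLinearMap₂'_toMatrix']
    simpa using hpos v hv

theorem convexOn_norm_add_smul_sq {X : Type*} [NormedAddCommGroup X] [NormedSpace ℝ X]
    (p u : X) : ConvexOn ℝ Set.univ fun t : ℝ => ‖p + t • u‖ ^ 2 := by
  have hnorm : ConvexOn ℝ Set.univ fun t : ℝ => ‖p + t • u‖ := by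
    simpa [Function.comp_def, AffineMap.lineMap_apply_module', add_comm] using
      (convexOn_norm convex_univ).comp_affineMap (AffineMap.lineMap p (p + u))
  exact hnorm.pow (fun _ _ => norm_nonneg _) 2

section PerturbedNorm

variable {X : Type*} [NormedAddCommGroup X] [NormedSpace ℝ X]
  {x : ℕ → X} {xs : ℕ → StrongDual ℝ X} {c : ℕ → ℝ} {ε : ℝ}

/-- The square `|||u|||²` of the perturbed norm. -/
noncomputable def perturbedSq (xs : ℕ → StrongDual ℝ X) (c : ℕ → ℝ) (ε : ℝ) (u : X) : ℝ :=
  ‖u‖ ^ 2 + ε * ∑' i, c i * (xs i u) ^ 2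

theorem perturbedSq_nonneg (hc : ∀ i, 0 ≤ c i) (hε : 0 ≤ ε) (u : X) :
    0 ≤ perturbedSq xs c ε u :=
  add_nonneg (sq_nonneg _) (mul_nonneg hε (tsum_nonneg fun i => mul_nonneg (hc i) (sq_nonneg _)))

theorem summable_mul_sq_apply (hc : ∀ i, 0 ≤ c i) (hsum : Summable fun i => c i * ‖xs i‖ ^ 2)
    (u : X) : Summable fun i => c i * (xs i u) ^ 2 := by
  refine .of_nonneg_of_le (fun i => mul_nonneg (hc i) (sq_nonneg _)) (fun i => ?_)
    (hsum.mul_right (‖u‖ ^ 2))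
  rw [mul_assoc, ← mul_pow, ← sq_abs, ← Real.norm_eq_abs]
  exact mul_le_mul_of_nonneg_left (by gcongr; exact (xs i).le_opNorm u) (hc i)

variable {n : ℕ} (z : X) (b : Fin n → ℝ)

theorem apply_add_sum_smul_of_lt (hbi : ∀ i j, xs i (x j) = if i = j then 1 else 0)
    (j : Fin n) : xs j (z + ∑ i : Fin n, b i • x i) = xs j z + b j := by
  simp [hbi, Fin.val_inj]

theorem apply_add_sum_smul_of_le (hbi : ∀ i j, xs i (x j) = if i = j then 1 else 0)
    {i : ℕ} (hi : n ≤ i) : xs i (z + ∑ j : Fin n, b j • x j) = xs i z := by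
  simp only [map_add, map_sum, map_smul, hbi, smul_eq_mul, mul_ite, mul_one, mul_zero]
  rw [Finset.sum_eq_zero fun j _ => if_neg (by omega), add_zero]

theorem perturbedSq_add_sum_smul (hbi : ∀ i j, xs i (x j) = if i = j then 1 else 0)
    (hc : ∀ i, 0 ≤ c i) (hsum : Summable fun i => c i * ‖xs i‖ ^ 2) :
    perturbedSq xs c ε (z + ∑ i : Fin n, b i • x i) = ‖z + ∑ i : Fin n, b i • x i‖ ^ 2 +
      ε * (∑ j : Fin n, c j * (xs j z + b j) ^ 2 + ∑' i, c (i + n) * (xs (i + n) z) ^ 2) := by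
  rw [perturbedSq, ← (summable_mul_sq_apply hc hsum _).sum_add_tsum_nat_add n,
    ← Fin.sum_univ_eq_sum_range]
  simp only [apply_add_sum_smul_of_lt z b hbi]
  congr 3
  exact tsum_congr fun i => by rw [apply_add_sum_smul_of_le z b hbi (Nat.le_add_left n i)]

theorem contDiffAt_perturbedSq_add_sum_smul (hbi : ∀ i j, xs i (x j) = if i = j then 1 else 0)
    (hc : ∀ i, 0 ≤ c i) (hsum : Summable fun i => c i * ‖xs i‖ ^ 2)
    (hnorm : ContDiffAt ℝ 2 (fun u : X => ‖u‖) (z + ∑ i : Fin n, b i • x i)) :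
    ContDiffAt ℝ 2 (fun b : Fin n → ℝ => perturbedSq xs c ε (z + ∑ i : Fin n, b i • x i)) b := by
  simp only [perturbedSq_add_sum_smul z _ hbi hc hsum]
  have hw : ContDiff ℝ 2 fun b : Fin n → ℝ => z + ∑ i : Fin n, b i • x i := by fun_prop
  refine ((hnorm.comp b hw.contDiffAt).pow 2).add (ContDiff.contDiffAt ?_)
  fun_prop

theorem convexOn_perturbedSq_add_sum_smul_sub_sq
    (hbi : ∀ i j, xs i (x j) = if i = j then 1 else 0)
    (hc : ∀ i, 0 ≤ c i) (hsum : Summable fun i => c i * ‖xs i‖ ^ 2) (v : Fin n → ℝ) :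
    ConvexOn ℝ Set.univ fun t : ℝ => perturbedSq xs c ε (z + ∑ i : Fin n, (b + t • v) i • x i) -
      (ε * ∑ j : Fin n, c j * v j ^ 2) * t ^ 2 := by
  set e : Fin n → ℝ := fun j => xs j z + b j
  have hline : ∀ t : ℝ, z + ∑ i : Fin n, (b + t • v) i • x i =
      (z + ∑ i : Fin n, b i • x i) + t • ∑ i : Fin n, v i • x i := fun t => by
    simp only [Pi.add_apply, Pi.smul_apply, smul_eq_mul, add_smul, mul_smul,
      Finset.sum_add_distrib, Finset.smul_sum, add_assoc]
  have hquad : ∀ t : ℝ, ∑ j : Fin n, c j * (xs j z + (b + t • v) j) ^ 2 =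
      t ^ 2 * ∑ j : Fin n, c j * v j ^ 2 + t * ∑ j : Fin n, 2 * c j * e j * v j +
        ∑ j : Fin n, c j * e j ^ 2 := fun t => by
    simp only [Finset.mul_sum, ← Finset.sum_add_distrib]
    refine Finset.sum_congr rfl fun j _ => ?_
    simp only [e, Pi.add_apply, Pi.smul_apply, smul_eq_mul]
    ring
  have hexpand : ∀ t : ℝ, perturbedSq xs c ε (z + ∑ i : Fin n, (b + t • v) i • x i) -
      (ε * ∑ j : Fin n, c j * v j ^ 2) * t ^ 2 =
        ‖(z + ∑ i : Fin n, b i • x i) + t • ∑ i : Fin n, v i • x i‖ ^ 2 +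
          (ε * ∑ j : Fin n, 2 * c j * e j * v j) * t +
          ε * (∑ j : Fin n, c j * e j ^ 2 + ∑' i, c (i + n) * (xs (i + n) z) ^ 2) := fun t => by
    rw [perturbedSq_add_sum_smul z _ hbi hc hsum, hquad, hline]
    ring
  simp only [hexpand]
  exact ((convexOn_norm_add_smul_sq (z + ∑ i : Fin n, b i • x i) (∑ i : Fin n, v i • x i)).add
    ((LinearMap.mulLeft ℝ (ε * ∑ j : Fin n, 2 * c j * e j * v j)).convexOn convex_univ)).add_const _

end PerturbedNorm

theorem hessian_posDef_of_perturbed_norm_general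
    {X : Type*} [NormedAddCommGroup X] [NormedSpace ℝ X]
    (k : ℕ∞) (hk : 2 ≤ k)
    (hsmooth : ContDiffOn ℝ k (fun z : X => ‖z‖) {(0 : X)}ᶜ)
    (x : ℕ → X) (xs : ℕ → StrongDual ℝ X)
    (hbi : ∀ i j : ℕ, xs i (x j) = if i = j then 1 else 0)
    (c : ℕ → ℝ) (hc : ∀ i : ℕ, 0 < c i)
    (hsum : Summable fun i : ℕ => c i * ‖xs i‖ ^ 2)
    (ε : ℝ) (hε : 0 < ε)
    (N : X → ℝ)
    (hN : ∀ z : X, N z = Real.sqrt (‖z‖ ^ 2 + ε * ∑' i : ℕ, c i * (xs i z) ^ 2))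
    (n : ℕ) (z : X)
    (h : (Fin n → ℝ) → ℝ)
    (hh : ∀ a : Fin n → ℝ, h a = N (z + ∑ i : Fin n, a i • x i) ^ 2) :
    ∀ a : Fin n → ℝ, z + ∑ i : Fin n, a i • x i ≠ 0 →
      ContDiffAt ℝ 2 h a ∧
      (Matrix.of fun i j : Fin n =>
          iteratedFDeriv ℝ 2 h a ![Pi.single i 1, Pi.single j 1]).PosDef := by
  intro a ha
  have hc₀ : ∀ i, 0 ≤ c i := fun i => (hc i).le
  obtain rfl : h = fun b => perturbedSq xs c ε (z + ∑ i : Fin n, b i • x i) := by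
    funext b
    rw [hh, hN]
    exact Real.sq_sqrt (perturbedSq_nonneg hc₀ hε.le _)
  have hnorm : ContDiffAt ℝ 2 (fun u : X => ‖u‖) (z + ∑ i : Fin n, a i • x i) :=
    (hsmooth.of_le (WithTop.coe_le_coe.2 hk)).contDiffAt (isOpen_compl_singleton.mem_nhds ha)
  have hCD := contDiffAt_perturbedSq_add_sum_smul (ε := ε) z a hbi hc₀ hsum hnorm
  refine ⟨hCD, Matrix.posDef_hessian_of_isSymmSndFDerivAt
    (hCD.isSymmSndFDerivAt (by simp)) fun v hv => ?_⟩
  obtain ⟨j₀, hj₀⟩ := Function.ne_iff.1 hv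
  have hκ : 0 < ε * ∑ j : Fin n, c j * v j ^ 2 := mul_pos hε <|
    Finset.sum_pos' (fun i _ => mul_nonneg (hc₀ i) (sq_nonneg _))
      ⟨j₀, Finset.mem_univ j₀, mul_pos (hc j₀) (pow_two_pos_of_ne_zero hj₀)⟩
  calc 0 < 2 * (ε * ∑ j : Fin n, c j * v j ^ 2) := by positivity
    _ ≤ _ := hCD.two_mul_le_fderiv_fderiv univ_mem
      (convexOn_perturbedSq_add_sum_smul_sub_sq z a hbi hc₀ hsum v)

/-- For the equivalent norm `|||x|||² = ‖x‖² + ε Σᵢ cᵢ (xᵢ*(x))²` built from a biorthogonal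
system on a Banach space with a `C^k`-smooth norm (`k ≥ 2`), the function
`h(a₁, …, aₙ) = |||x + Σ aᵢ xᵢ|||²` is twice continuously differentiable with positive
definite Hessian at every point where `x + Σ aᵢ xᵢ ≠ 0`. -/
theorem hessian_posDef_of_perturbed_norm
    {X : Type*} [NormedAddCommGroup X] [NormedSpace ℝ X] [CompleteSpace X]
    (k : ℕ∞) (hk : 2 ≤ k)
    (hsmooth : ContDiffOn ℝ k (fun z : X => ‖z‖) {(0 : X)}ᶜ)
    (x : ℕ → X) (xs : ℕ → StrongDual ℝ X)
    (hbi : ∀ i j : ℕ, xs i (x j) = if i = j then 1 else 0)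
    (c : ℕ → ℝ) (hc : ∀ i : ℕ, 0 < c i)
    (hsum : Summable fun i : ℕ => c i * ‖xs i‖ ^ 2)
    (ε : ℝ) (hε : 0 < ε)
    (N : X → ℝ)
    (hN : ∀ z : X, N z = Real.sqrt (‖z‖ ^ 2 + ε * ∑' i : ℕ, c i * (xs i z) ^ 2))
    (n : ℕ) (z : X)
    (h : (Fin n → ℝ) → ℝ)
    (hh : ∀ a : Fin n → ℝ, h a = N (z + ∑ i : Fin n, a i • x i) ^ 2) :
    ∀ a : Fin n → ℝ, z + ∑ i : Fin n, a i • x i ≠ 0 →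
      ContDiffAt ℝ 2 h a ∧
      (Matrix.of fun i j : Fin n =>
          iteratedFDeriv ℝ 2 h a ![Pi.single i 1, Pi.single j 1]).PosDef :=
  hessian_posDef_of_perturbed_norm_general k hk hsmooth x xs hbi c hc hsum ε hε N hN n z h hh
end

section
/- There exists a norm N on ℝ² such that: (a) N is infinitely Fréchet differentiable at every point of ℝ² ∖ {(0,0)}; (b) N(−a, b) = N(a, b) = N(b, a) for all a, b ∈ ℝ; and (c) N(1, −1/2) = N(1, 0) = N(1, 1/2) = 1, i.e. the points (1, −1/2), (1, 0), (1, 1/2) all lie on the unit sphere of (ℝ², N). -/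
open Set Filter Topology Real

section LocalConvexity

theorem convexOn_univ_of_forall_nhds_convexOn {φ : ℝ → ℝ} (hφ : ContDiff ℝ 2 φ)
    (hloc : ∀ t, ∃ s ∈ 𝓝 t, ConvexOn ℝ s φ) : ConvexOn ℝ univ φ := by
  obtain ⟨hφ', -, hφ''⟩ := (contDiff_succ_iff_deriv (n := 1)).1 hφ
  have hdiff' : Differentiable ℝ (deriv φ) := hφ''.differentiable (by norm_num)
  refine convexOn_univ_of_deriv2_nonneg hφ' hdiff' fun t => ?_
  obtain ⟨s, hs, hconv⟩ := hloc t
  have hacc : AccPt t (𝓟 s) := by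
    simpa using (PerfectSpace.univ_preperfect t (mem_univ t)).nhds_inter hs
  exact (hdiff' t).hasDerivAt.hasDerivWithinAt.nonneg_of_monotoneOn hacc
    (hconv.monotoneOn_deriv fun x _ => hφ' x)

variable {E : Type*} [NormedAddCommGroup E] [NormedSpace ℝ E] {N : E → ℝ}

theorem convexOn_comp_lineMap_of_forall_nhds_convexOn (hN : ContDiffOn ℝ 2 N {0}ᶜ)
    (hloc : ∀ x ≠ 0, ∃ U ∈ 𝓝 x, ConvexOn ℝ U N) {x y : E}
    (hxy : ∀ t : ℝ, AffineMap.lineMap (k := ℝ) x y t ≠ 0) :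
    ConvexOn ℝ univ (N ∘ AffineMap.lineMap (k := ℝ) x y) := by
  refine convexOn_univ_of_forall_nhds_convexOn
    (hN.comp_contDiff (AffineMap.contDiff_lineMap x y) hxy) fun t => ?_
  obtain ⟨U, hU, hconv⟩ := hloc _ (hxy t)
  exact ⟨_, (AffineMap.lineMap_continuous.tendsto t) hU, hconv.comp_affineMap _⟩

theorem map_add_le_add_of_forall_nhds_convexOn (hN : ContDiffOn ℝ 2 N {0}ᶜ)
    (hloc : ∀ x ≠ 0, ∃ U ∈ 𝓝 x, ConvexOn ℝ U N) (hsmul : ∀ (c : ℝ) x, N (c • x) = |c| * N x)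
    (hnonneg : ∀ x, 0 ≤ N x) (x y : E) : N (x + y) ≤ N x + N y := by
  rcases em (∃ t : ℝ, AffineMap.lineMap (k := ℝ) x y t = 0) with ⟨t, ht⟩ | hxy
  · rw [AffineMap.lineMap_apply_module] at ht
    have hx : x = -t • (y - x) := by linear_combination (norm := module) ht
    have hy : y = (1 - t) • (y - x) := by linear_combination (norm := module) ht
    have hsum : x + y = (1 - 2 * t) • (y - x) := by linear_combination (norm := module) 2 • ht
    calc N (x + y) = |-t + (1 - t)| * N (y - x) := by rw [hsum, hsmul]; ring_nf
      _ ≤ (|-t| + |1 - t|) * N (y - x) := by gcongr; exacts [hnonneg _, abs_add_le _ _]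
      _ = N x + N y := by rw [add_mul, ← hsmul, ← hsmul, ← hx, ← hy]
  · have hmid : N (AffineMap.lineMap x y (1 / 2 : ℝ)) ≤ 1 / 2 * N x + 1 / 2 * N y := by
      simpa using (convexOn_comp_lineMap_of_forall_nhds_convexOn hN hloc (not_exists.1 hxy)).2
        (mem_univ 0) (mem_univ 1) (by norm_num : (0 : ℝ) ≤ 1 / 2)
        (by norm_num : (0 : ℝ) ≤ 1 / 2) (by norm_num)
    have hhalf : AffineMap.lineMap x y (1 / 2 : ℝ) = (1 / 2 : ℝ) • (x + y) := by
      rw [AffineMap.lineMap_apply_module]; module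
    rw [hhalf, hsmul, abs_of_pos (by norm_num)] at hmid
    linarith

end LocalConvexity

theorem ConvexOn.perspective {E : Type*} [AddCommGroup E] [Module ℝ E] {g : E → ℝ}
    (hg : ConvexOn ℝ univ g) :
    ConvexOn ℝ (Ioi 0 ×ˢ univ) fun p : ℝ × E => p.1 * g (p.1⁻¹ • p.2) := by
  refine ⟨(convex_Ioi 0).prod convex_univ, ?_⟩
  rintro ⟨s, x⟩ ⟨hs, -⟩ ⟨t, y⟩ ⟨ht, -⟩ a b ha hb hab
  simp only [mem_Ioi] at hs ht
  simp only [Prod.smul_mk, Prod.mk_add_mk, smul_eq_mul]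
  have hr : 0 < a * s + b * t := by rcases le_total s t with h | h <;> nlinarith
  have key := hg.2 (mem_univ (s⁻¹ • x)) (mem_univ (t⁻¹ • y))
    (div_nonneg (mul_nonneg ha hs.le) hr.le) (div_nonneg (mul_nonneg hb ht.le) hr.le)
    (by field_simp)
  have hmix : (a * s / (a * s + b * t)) • s⁻¹ • x + (b * t / (a * s + b * t)) • t⁻¹ • y =
      (a * s + b * t)⁻¹ • (a • x + b • y) := by
    rw [smul_smul, smul_smul, smul_add, smul_smul, smul_smul]
    congr 2 <;> field_simp
  rw [hmix, smul_eq_mul, smul_eq_mul] at key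
  calc (a * s + b * t) * g ((a * s + b * t)⁻¹ • (a • x + b • y))
      ≤ (a * s + b * t) * (a * s / (a * s + b * t) * g (s⁻¹ • x) +
          b * t / (a * s + b * t) * g (t⁻¹ • y)) := mul_le_mul_of_nonneg_left key hr.le
    _ = a * (s * g (s⁻¹ • x)) + b * (t * g (t⁻¹ • y)) := by field_simp

noncomputable section

namespace SmoothPlanarNorm

def ramp (t : ℝ) : ℝ := smoothTransition (4 * t - 2)

theorem contDiff_ramp : ContDiff ℝ (⊤ : ℕ∞) ramp :=
  smoothTransition.contDiff.comp (by fun_prop)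

theorem monotone_ramp : Monotone ramp :=
  smoothTransition.monotone.comp fun _ _ h => by linarith

theorem ramp_eq_zero {t : ℝ} (ht : t ≤ 1 / 2) : ramp t = 0 :=
  smoothTransition.zero_of_nonpos (by linarith)

theorem ramp_eq_one {t : ℝ} (ht : 3 / 4 ≤ t) : ramp t = 1 :=
  smoothTransition.one_of_one_le (by linarith)

def oddRamp (t : ℝ) : ℝ := ramp t - ramp (-t)

theorem contDiff_oddRamp : ContDiff ℝ (⊤ : ℕ∞) oddRamp :=
  contDiff_ramp.sub (contDiff_ramp.comp contDiff_neg)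

theorem continuous_oddRamp : Continuous oddRamp :=
  contDiff_oddRamp.continuous

theorem monotone_oddRamp : Monotone oddRamp := fun x y h => by
  have := monotone_ramp h
  have := monotone_ramp (neg_le_neg h)
  simp only [oddRamp]
  linarith

theorem oddRamp_neg (t : ℝ) : oddRamp (-t) = -oddRamp t := by
  simp only [oddRamp, neg_neg, neg_sub]

theorem oddRamp_eq_zero {t : ℝ} (ht : |t| ≤ 1 / 2) : oddRamp t = 0 := by
  rw [abs_le] at ht
  rw [oddRamp, ramp_eq_zero ht.2, ramp_eq_zero (by linarith), sub_zero]

theorem oddRamp_eq_one {t : ℝ} (ht : 3 / 4 ≤ t) : oddRamp t = 1 := by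
  rw [oddRamp, ramp_eq_one ht, ramp_eq_zero (by linarith), sub_zero]

theorem oddRamp_le_one (t : ℝ) : oddRamp t ≤ 1 := by
  have := smoothTransition.le_one (4 * t - 2)
  have := smoothTransition.nonneg (4 * -t - 2)
  simp only [oddRamp, ramp]
  linarith

def smoothAbs (t : ℝ) : ℝ := ∫ s in 0..t, oddRamp s

theorem hasDerivAt_smoothAbs (t : ℝ) : HasDerivAt smoothAbs (oddRamp t) t :=
  (continuous_oddRamp.integral_hasStrictDerivAt 0 t).hasDerivAt

theorem deriv_smoothAbs : deriv smoothAbs = oddRamp :=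
  funext fun t => (hasDerivAt_smoothAbs t).deriv

theorem differentiable_smoothAbs : Differentiable ℝ smoothAbs :=
  fun t => (hasDerivAt_smoothAbs t).differentiableAt

theorem contDiff_smoothAbs : ContDiff ℝ (⊤ : ℕ∞) smoothAbs :=
  contDiff_infty_iff_deriv.2 ⟨differentiable_smoothAbs, deriv_smoothAbs ▸ contDiff_oddRamp⟩

theorem convexOn_smoothAbs : ConvexOn ℝ univ smoothAbs :=
  (deriv_smoothAbs ▸ monotone_oddRamp : Monotone (deriv smoothAbs)).convexOn_univ_of_deriv
    differentiable_smoothAbs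

theorem smoothAbs_neg (t : ℝ) : smoothAbs (-t) = smoothAbs t := by
  have h := intervalIntegral.integral_comp_neg (a := 0) (b := t) oddRamp
  simp only [oddRamp_neg, intervalIntegral.integral_neg, neg_zero] at h
  rw [smoothAbs, smoothAbs, intervalIntegral.integral_symm, ← h, neg_neg]

theorem smoothAbs_eq_zero {t : ℝ} (ht : |t| ≤ 1 / 2) : smoothAbs t = 0 := by
  rw [smoothAbs, intervalIntegral.integral_congr (g := fun _ => 0), intervalIntegral.integral_zero]
  intro s hs
  exact oddRamp_eq_zero ((by simpa using abs_sub_left_of_mem_uIcc hs : |s| ≤ |t|).trans ht)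

theorem smoothAbs_eq_of_three_quarters_le {t : ℝ} (ht : 3 / 4 ≤ t) :
    smoothAbs t = smoothAbs (3 / 4) + t - 3 / 4 := by
  have htail : ∫ s in (3 / 4)..t, oddRamp s = t - 3 / 4 := by
    rw [intervalIntegral.integral_congr (g := fun _ => 1) fun s hs => oddRamp_eq_one ?_]
    · simp
    · exact (uIcc_of_le ht ▸ hs).1
  rw [← intervalIntegral.integral_interval_sub_left (continuous_oddRamp.intervalIntegrable 0 t)
    (continuous_oddRamp.intervalIntegrable 0 (3 / 4))] at htail
  rw [smoothAbs, smoothAbs]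
  linarith

theorem smoothAbs_eq_of_three_quarters_le_abs {t : ℝ} (ht : 3 / 4 ≤ |t|) :
    smoothAbs t = smoothAbs (3 / 4) + |t| - 3 / 4 := by
  rcases le_total 0 t with h | h
  · rw [abs_of_nonneg h] at ht ⊢
    exact smoothAbs_eq_of_three_quarters_le ht
  · rw [abs_of_nonpos h] at ht ⊢
    rw [← smoothAbs_neg, smoothAbs_eq_of_three_quarters_le ht]

theorem smoothAbs_three_quarters_le : smoothAbs (3 / 4) ≤ 3 / 4 := by
  have := intervalIntegral.integral_mono (by norm_num : (0 : ℝ) ≤ 3 / 4)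
    (continuous_oddRamp.intervalIntegrable _ _) (intervalIntegrable_const (μ := MeasureTheory.volume))
    oddRamp_le_one
  simpa [smoothAbs] using this

theorem smoothAbs_nonneg (t : ℝ) : 0 ≤ smoothAbs t := by
  have h := convexOn_smoothAbs.2 (mem_univ t) (mem_univ (-t)) (by norm_num : (0 : ℝ) ≤ 1 / 2)
    (by norm_num : (0 : ℝ) ≤ 1 / 2) (by norm_num)
  rw [smoothAbs_neg, smul_neg, add_neg_cancel, smoothAbs_eq_zero (by norm_num)] at h
  simpa using h

/-- The tail `α (1 + |t|)` is what makes `|a| g (b / a) = |b| g (a / b)` once both ratios have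
absolute value at least `3/4`. -/
structure NormProfile (g : ℝ → ℝ) : Prop where
  contDiff : ContDiff ℝ (⊤ : ℕ∞) g
  convexOn : ConvexOn ℝ univ g
  even : Function.Even g
  pos : ∀ t, 0 < g t
  eq_mul_of_three_quarters_le : ∃ α, ∀ t, 3 / 4 ≤ |t| → g t = α * (1 + |t|)

-- normalised so that `profile t = (1 + |t|) / (7/4 - smoothAbs (3/4))` for `|t| ≥ 3/4`
def profile (t : ℝ) : ℝ := 1 + smoothAbs t / (7 / 4 - smoothAbs (3 / 4))

theorem profile_eq_one {t : ℝ} (ht : |t| ≤ 1 / 2) : profile t = 1 := by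
  rw [profile, smoothAbs_eq_zero ht, zero_div, add_zero]

theorem normProfile_profile : NormProfile profile where
  contDiff := contDiff_const.add (contDiff_smoothAbs.div_const _)
  convexOn := by
    have hc : 0 ≤ (7 / 4 - smoothAbs (3 / 4))⁻¹ := by
      have := smoothAbs_three_quarters_le
      exact inv_nonneg.2 (by linarith)
    exact ((convexOn_const 1 convex_univ).add (convexOn_smoothAbs.smul hc)).congr fun t _ => by
      simp only [Pi.add_apply, smul_eq_mul, profile, div_eq_inv_mul]
  even t := by rw [profile, profile, smoothAbs_neg]
  pos t := by
    have := smoothAbs_three_quarters_le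
    exact add_pos_of_pos_of_nonneg one_pos (div_nonneg (smoothAbs_nonneg t) (by linarith))
  eq_mul_of_three_quarters_le := by
    refine ⟨(7 / 4 - smoothAbs (3 / 4))⁻¹, fun t ht => ?_⟩
    have hc : 7 / 4 - smoothAbs (3 / 4) ≠ 0 := by linarith [smoothAbs_three_quarters_le]
    rw [profile, smoothAbs_eq_of_three_quarters_le_abs ht, eq_inv_mul_iff_mul_eq₀ hc, mul_add,
      mul_div_cancel₀ _ hc]
    ring

def planarNorm (g : ℝ → ℝ) (p : ℝ × ℝ) : ℝ :=
  if |p.2| ≤ |p.1| then |p.1| * g (p.2 / p.1) else |p.2| * g (p.1 / p.2)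

variable {g : ℝ → ℝ}

theorem planarNorm_swap (hg : Function.Even g) (p : ℝ × ℝ) :
    planarNorm g p.swap = planarNorm g p := by
  obtain ⟨a, b⟩ := p
  simp only [planarNorm, Prod.fst_swap, Prod.snd_swap]
  rcases lt_trichotomy |a| |b| with h | h | h
  · rw [if_pos h.le, if_neg (not_le.2 h)]
  · rcases abs_eq_abs.1 h with rfl | rfl
    · simp
    · simp [div_neg, neg_div, hg _]
  · rw [if_neg (not_le.2 h), if_pos h.le]

theorem planarNorm_neg_fst (hg : Function.Even g) (a b : ℝ) :
    planarNorm g (-a, b) = planarNorm g (a, b) := by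
  simp only [planarNorm, abs_neg, div_neg, neg_div, hg _]

theorem planarNorm_smul (c : ℝ) (p : ℝ × ℝ) : planarNorm g (c • p) = |c| * planarNorm g p := by
  rcases eq_or_ne c 0 with rfl | hc
  · simp [planarNorm]
  simp only [planarNorm, Prod.smul_fst, Prod.smul_snd, smul_eq_mul, abs_mul,
    mul_le_mul_iff_right₀ (abs_pos.2 hc), mul_div_mul_left _ _ hc]
  split_ifs <;> ring

theorem planarNorm_neg (p : ℝ × ℝ) : planarNorm g (-p) = planarNorm g p := by
  simpa using planarNorm_smul (g := g) (-1) p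

theorem planarNorm_nonneg (hg : ∀ t, 0 ≤ g t) (p : ℝ × ℝ) : 0 ≤ planarNorm g p := by
  unfold planarNorm
  split_ifs <;> exact mul_nonneg (abs_nonneg _) (hg _)

theorem eq_zero_of_planarNorm_eq_zero (hg : ∀ t, 0 < g t) {p : ℝ × ℝ}
    (hp : planarNorm g p = 0) : p = 0 := by
  obtain ⟨a, b⟩ := p
  unfold planarNorm at hp
  split_ifs at hp with h
  · have ha : a = 0 := by simpa [(hg _).ne'] using hp
    simp_all
  · have hb : b = 0 := by simpa [(hg _).ne'] using hp
    simp_all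

theorem planarNorm_one_mk {t : ℝ} (ht : |t| ≤ 1) : planarNorm g (1, t) = g t := by
  simp [planarNorm, ht]

def sector : Set (ℝ × ℝ) := {q | |q.2| < 4 / 3 * q.1}

theorem isOpen_sector : IsOpen sector :=
  isOpen_lt (by fun_prop) (by fun_prop)

theorem fst_pos_of_mem_sector {q : ℝ × ℝ} (hq : q ∈ sector) : 0 < q.1 := by
  have : 0 ≤ |q.2| := abs_nonneg _
  simp only [sector, mem_ofPred_eq] at hq
  linarith

theorem planarNorm_eq_of_mem_sector (hg : ∃ α, ∀ t, 3 / 4 ≤ |t| → g t = α * (1 + |t|))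
    {q : ℝ × ℝ} (hq : q ∈ sector) : planarNorm g q = q.1 * g (q.2 / q.1) := by
  obtain ⟨a, b⟩ := q
  have ha := fst_pos_of_mem_sector hq
  simp only [sector, mem_ofPred_eq] at hq ha
  simp only [planarNorm, abs_of_pos ha]
  split_ifs with h
  · rfl
  obtain ⟨α, hα⟩ := hg
  have hb : 0 < |b| := ha.trans (not_le.1 h)
  have hba : 3 / 4 ≤ |b / a| := by rw [abs_div, abs_of_pos ha, le_div_iff₀ ha]; linarith
  have hab : 3 / 4 ≤ |a / b| := by rw [abs_div, abs_of_pos ha, le_div_iff₀ hb]; linarith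
  rw [hα _ hba, hα _ hab, abs_div, abs_div, abs_of_pos ha]
  field_simp
  ring

theorem mem_sector_or_neg_mem_sector {p : ℝ × ℝ} (hp : p ≠ 0) (h : |p.2| ≤ |p.1|) :
    p ∈ sector ∨ -p ∈ sector := by
  have h1 : p.1 ≠ 0 := fun h1 => hp (Prod.ext h1 (by simpa [h1] using h))
  simp only [sector, mem_ofPred_eq, Prod.fst_neg, Prod.snd_neg, abs_neg]
  rcases h1.lt_or_gt with h1 | h1
  · right; rw [abs_of_neg h1] at h; linarith
  · left; rw [abs_of_pos h1] at h; linarith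

theorem exists_symmetry_mem_sector (hg : Function.Even g) {p : ℝ × ℝ} (hp : p ≠ 0) :
    ∃ σ : ℝ × ℝ →L[ℝ] ℝ × ℝ, σ p ∈ sector ∧ ∀ q, planarNorm g (σ q) = planarNorm g q := by
  let swap : ℝ × ℝ →L[ℝ] ℝ × ℝ := ContinuousLinearEquiv.prodComm ℝ ℝ ℝ
  have hswap (q : ℝ × ℝ) : swap q = q.swap := rfl
  rcases le_total |p.2| |p.1| with h | h
  · rcases mem_sector_or_neg_mem_sector hp h with hs | hs
    · exact ⟨ContinuousLinearMap.id ℝ _, hs, fun q => rfl⟩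
    · exact ⟨-ContinuousLinearMap.id ℝ _, hs, fun q => planarNorm_neg q⟩
  · have hp' : p.swap ≠ 0 := fun h0 => hp (by simpa using congrArg Prod.swap h0)
    rcases mem_sector_or_neg_mem_sector hp' h with hs | hs
    · exact ⟨swap, hs, fun q => planarNorm_swap hg q⟩
    · exact ⟨-swap, hs, fun q => (planarNorm_neg _).trans (planarNorm_swap hg q)⟩

theorem contDiffAt_planarNorm (hg : NormProfile g) {p : ℝ × ℝ} (hp : p ≠ 0) :
    ContDiffAt ℝ (⊤ : ℕ∞) (planarNorm g) p := by
  obtain ⟨σ, hσp, hσ⟩ := exists_symmetry_mem_sector hg.even hp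
  have hchart : ContDiffAt ℝ (⊤ : ℕ∞) (fun q : ℝ × ℝ => q.1 * g (q.2 / q.1)) (σ p) :=
    contDiffAt_fst.mul (hg.contDiff.contDiffAt.comp _
      (contDiffAt_snd.div contDiffAt_fst (fst_pos_of_mem_sector hσp).ne'))
  refine (hchart.comp p σ.contDiff.contDiffAt).congr_of_eventuallyEq ?_
  filter_upwards [σ.continuous.continuousAt.preimage_mem_nhds (isOpen_sector.mem_nhds hσp)]
    with q hq
  rw [← hσ q, planarNorm_eq_of_mem_sector hg.eq_mul_of_three_quarters_le hq]
  rfl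

theorem exists_nhds_convexOn_planarNorm (hg : NormProfile g) {p : ℝ × ℝ} (hp : p ≠ 0) :
    ∃ U ∈ 𝓝 p, ConvexOn ℝ U (planarNorm g) := by
  obtain ⟨σ, hσp, hσ⟩ := exists_symmetry_mem_sector hg.even hp
  obtain ⟨ε, hε, hball⟩ := Metric.isOpen_iff.1 isOpen_sector _ hσp
  have hconv : ConvexOn ℝ (Metric.ball (σ p) ε) fun q : ℝ × ℝ => q.1 * g (q.2 / q.1) := by
    refine (hg.convexOn.perspective.subset (fun q hq => ⟨fst_pos_of_mem_sector (hball hq),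
      mem_univ _⟩) (convex_ball _ _)).congr fun q _ => ?_
    simp only [smul_eq_mul, inv_mul_eq_div]
  refine ⟨σ ⁻¹' Metric.ball (σ p) ε,
    σ.continuous.continuousAt.preimage_mem_nhds (Metric.ball_mem_nhds _ hε),
    (hconv.comp_linearMap σ.toLinearMap).congr fun q hq => ?_⟩
  exact ((hσ q).symm.trans
    (planarNorm_eq_of_mem_sector hg.eq_mul_of_three_quarters_le (hball hq))).symm

theorem isNorm_planarNorm (hg : NormProfile g) : IsNorm (planarNorm g) := by
  have hsmooth : ContDiffOn ℝ 2 (planarNorm g) {0}ᶜ := fun p hp =>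
    (contDiffAt_planarNorm hg hp).contDiffWithinAt.of_le (by norm_cast)
  exact ⟨map_add_le_add_of_forall_nhds_convexOn hsmooth
      (fun p hp => exists_nhds_convexOn_planarNorm hg hp) planarNorm_smul
      (planarNorm_nonneg fun t => (hg.pos t).le),
    planarNorm_smul, fun p => eq_zero_of_planarNorm_eq_zero hg.pos⟩

end SmoothPlanarNorm

end

/-- There is a `C^∞`-smooth norm `N` on `ℝ²` which is symmetric under sign change and under
swapping coordinates, and whose unit sphere contains `(1, -1/2)`, `(1, 0)` and `(1, 1/2)`. -/
theorem exists_smooth_symmetric_planar_norm :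
    ∃ N : ℝ × ℝ → ℝ, IsNorm N ∧
      ContDiffOn ℝ (⊤ : ℕ∞) N {(0 : ℝ × ℝ)}ᶜ ∧
      (∀ a b : ℝ, N (-a, b) = N (a, b) ∧ N (a, b) = N (b, a)) ∧
      N (1, -(1 / 2)) = 1 ∧ N (1, 0) = 1 ∧ N (1, 1 / 2) = 1 := by
  open SmoothPlanarNorm in
  have hg := normProfile_profile
  have hpoint {t : ℝ} (ht : |t| ≤ 1 / 2) : planarNorm profile (1, t) = 1 := by
    rw [planarNorm_one_mk (ht.trans (by norm_num)), profile_eq_one ht]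
  refine ⟨planarNorm profile, isNorm_planarNorm hg,
    fun p hp => (contDiffAt_planarNorm hg hp).contDiffWithinAt,
    fun a b => ⟨planarNorm_neg_fst hg.even a b, (planarNorm_swap hg.even (a, b)).symm⟩,
    hpoint (by norm_num [abs_of_neg]), hpoint (by norm_num), hpoint (by norm_num [abs_of_pos])⟩
end

section
/- Let (X, ‖·‖) be a real Banach space whose norm is C^k-smooth for k ∈ ℕ ∪ {∞}, let E ⊂ X be a finite-dimensional subspace with a bounded linear projection P : X → E, and let q : X → X/E be the quotient map; suppose the quotient norm ‖·‖_{X/E} is C^k-smooth on X/E. Let N be a norm on ℝ² that is C^∞ on ℝ² ∖ {0}, satisfies N(−a, b) = N(a, b) = N(b, a) for all a, b ∈ ℝ, and has N(1, −1/2) = N(1, 0) = N(1, 1/2) = 1. Then for every a > 0 the formula N_a(x) = N(a·‖P(x)‖, ‖q(x)‖_{X/E}) defines an equivalent norm on X that is C^k-smooth on X ∖ {0} and satisfies N_a(x) ≥ ‖q(x)‖_{X/E} for all x ∈ X. -/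
open Filter Topology

/-! Convexity and the symmetries of `N`, with `N (1, u) = 1` for `|u| ≤ 1/2`, give
`N (s, t) = s` whenever `2 |t| ≤ s` (and symmetrically), monotonicity of `N` in `|s|` and `|t|`,
and `max |s| |t| ≤ N (s, t) ≤ |s| + |t|`. Monotonicity yields the triangle inequality for
`N (p x, r x)` with seminorms `p`, `r`; the two-sided bounds yield equivalence, because
`x - P x` only depends on `q x`, so `‖x‖ ≤ ‖P x‖ + (1 + ‖P‖) ‖q x‖`. At `x ≠ 0`, if one of
`a ‖P x‖`, `‖q x‖` exceeds twice the other, then `N_a` coincides near `x` with the larger one,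
which is nonzero there and hence `C^k`; otherwise both are nonzero and `N_a` is a composite of
`C^k` maps. -/

open Set

namespace IsNorm

section Module

variable {X : Type*} [AddCommGroup X] [Module ℝ X] {N : X → ℝ}

theorem map_zero (hN : IsNorm N) : N 0 = 0 := by
  simpa using hN.2.1 0 0

theorem convexOn (hN : IsNorm N) : ConvexOn ℝ univ N := by
  refine ⟨convex_univ, fun u _ w _ s t hs ht _ => ?_⟩
  calc N (s • u + t • w) ≤ N (s • u) + N (t • w) := hN.1 _ _
    _ = s * N u + t * N w := by rw [hN.2.1, hN.2.1, abs_of_nonneg hs, abs_of_nonneg ht]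

end Module

section Planar

variable {N : ℝ × ℝ → ℝ}

theorem apply_neg_snd (hN : IsNorm N) (hneg : ∀ s t : ℝ, N (-s, t) = N (s, t)) (s t : ℝ) :
    N (s, -t) = N (s, t) := by
  have h := hN.2.1 (-1) (-s, t)
  simp only [Prod.smul_mk, smul_eq_mul, neg_mul, one_mul, neg_neg, abs_neg, abs_one] at h
  rw [h, hneg]

theorem apply_abs_snd (hN : IsNorm N) (hneg : ∀ s t : ℝ, N (-s, t) = N (s, t)) (s t : ℝ) :
    N (s, |t|) = N (s, t) := by
  rcases abs_choice t with h | h <;> rw [h]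
  exact apply_neg_snd hN hneg s t

theorem apply_le_of_abs_le_abs_snd (hN : IsNorm N) (hneg : ∀ s t : ℝ, N (-s, t) = N (s, t))
    {s t t' : ℝ} (h : |t| ≤ |t'|) : N (s, t) ≤ N (s, t') := by
  have hmem : (s, t) ∈ segment ℝ (s, -|t'|) (s, |t'|) := by
    rw [← Prod.image_mk_segment_right, segment_eq_Icc (neg_le_self (abs_nonneg t'))]
    exact ⟨t, abs_le.1 h, rfl⟩
  calc N (s, t) ≤ max (N (s, -|t'|)) (N (s, |t'|)) :=
        hN.convexOn.le_on_segment (mem_univ _) (mem_univ _) hmem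
    _ = N (s, t') := by rw [apply_neg_snd hN hneg, max_self, apply_abs_snd hN hneg]

theorem apply_le_of_abs_le_abs_fst (hN : IsNorm N) (hneg : ∀ s t : ℝ, N (-s, t) = N (s, t))
    (hswap : ∀ s t : ℝ, N (s, t) = N (t, s)) {s s' t : ℝ} (h : |s| ≤ |s'|) :
    N (s, t) ≤ N (s', t) := by
  rw [hswap s, hswap s']
  exact apply_le_of_abs_le_abs_snd hN hneg h

theorem apply_one_of_abs_le (hN : IsNorm N) (hneg : ∀ s t : ℝ, N (-s, t) = N (s, t))
    (hval : N (1, -(1 / 2)) = 1 ∧ N (1, 0) = 1 ∧ N (1, 1 / 2) = 1) {u : ℝ} (hu : |u| ≤ 1 / 2) :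
    N (1, u) = 1 := by
  obtain ⟨hm, h0, hp⟩ := hval
  have hmem : (1, u) ∈ segment ℝ ((1 : ℝ), -(1 / 2 : ℝ)) (1, 1 / 2) := by
    rw [← Prod.image_mk_segment_right, segment_eq_Icc (by norm_num)]
    exact ⟨u, abs_le.1 hu, rfl⟩
  refine le_antisymm ?_ ?_
  · calc N (1, u) ≤ max (N (1, -(1 / 2))) (N (1, 1 / 2)) :=
          hN.convexOn.le_on_segment (mem_univ _) (mem_univ _) hmem
      _ = 1 := by rw [hm, hp, max_self]
  · calc 1 = N (1, 0) := h0.symm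
      _ ≤ N (1, u) := apply_le_of_abs_le_abs_snd hN hneg (by simp)

theorem apply_eq_fst (hN : IsNorm N) (hneg : ∀ s t : ℝ, N (-s, t) = N (s, t))
    (hval : N (1, -(1 / 2)) = 1 ∧ N (1, 0) = 1 ∧ N (1, 1 / 2) = 1) {s t : ℝ}
    (h : 2 * |t| ≤ s) : N (s, t) = s := by
  obtain rfl | hs := (abs_nonneg t).trans (by linarith [abs_nonneg t] : |t| ≤ s) |>.eq_or_lt
  · obtain rfl : t = 0 := abs_nonpos_iff.1 (by linarith)
    exact hN.map_zero
  · calc N (s, t) = N (s • (1, t / s)) := by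
          rw [Prod.smul_mk, smul_eq_mul, smul_eq_mul, mul_one, mul_div_cancel₀ _ hs.ne']
      _ = s := by
          rw [hN.2.1, abs_of_pos hs, apply_one_of_abs_le hN hneg hval, mul_one]
          rw [abs_div, abs_of_pos hs, div_le_iff₀ hs]
          linarith

theorem apply_eq_snd (hN : IsNorm N) (hneg : ∀ s t : ℝ, N (-s, t) = N (s, t))
    (hswap : ∀ s t : ℝ, N (s, t) = N (t, s))
    (hval : N (1, -(1 / 2)) = 1 ∧ N (1, 0) = 1 ∧ N (1, 1 / 2) = 1) {s t : ℝ}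
    (h : 2 * |s| ≤ t) : N (s, t) = t := by
  rw [hswap]
  exact apply_eq_fst hN hneg hval h

theorem abs_fst_le (hN : IsNorm N) (hneg : ∀ s t : ℝ, N (-s, t) = N (s, t))
    (h0 : N (1, 0) = 1) (s t : ℝ) : |s| ≤ N (s, t) :=
  calc |s| = N (s • (1, 0)) := by rw [hN.2.1, h0, mul_one]
    _ ≤ N (s, t) := by
        simpa using apply_le_of_abs_le_abs_snd hN hneg (s := s) (by simp : |(0 : ℝ)| ≤ |t|)

theorem abs_snd_le (hN : IsNorm N) (hneg : ∀ s t : ℝ, N (-s, t) = N (s, t))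
    (hswap : ∀ s t : ℝ, N (s, t) = N (t, s)) (h0 : N (1, 0) = 1) (s t : ℝ) :
    |t| ≤ N (s, t) := by
  rw [hswap]
  exact abs_fst_le hN hneg h0 t s

theorem apply_le_abs_add_abs (hN : IsNorm N) (hswap : ∀ s t : ℝ, N (s, t) = N (t, s))
    (h0 : N (1, 0) = 1) (s t : ℝ) : N (s, t) ≤ |s| + |t| :=
  calc N (s, t) = N (s • (1, 0) + t • (0, 1)) := by simp
    _ ≤ N (s • (1, 0)) + N (t • (0, 1)) := hN.1 _ _
    _ = |s| + |t| := by rw [hN.2.1, hN.2.1, ← hswap 1 0, h0, mul_one, mul_one]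

theorem comp_seminorms {X : Type*} [AddCommGroup X] [Module ℝ X] (hN : IsNorm N)
    (hneg : ∀ s t : ℝ, N (-s, t) = N (s, t)) (hswap : ∀ s t : ℝ, N (s, t) = N (t, s))
    (p r : Seminorm ℝ X) (hpr : ∀ x, p x = 0 → r x = 0 → x = 0) :
    IsNorm fun x => N (p x, r x) := by
  refine ⟨fun x y => ?_, fun c x => ?_, fun x hx => ?_⟩
  · calc N (p (x + y), r (x + y)) ≤ N (p x + p y, r (x + y)) :=
          apply_le_of_abs_le_abs_fst hN hneg hswap
            (abs_le_abs_of_nonneg (apply_nonneg _ _) (map_add_le_add p x y))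
      _ ≤ N (p x + p y, r x + r y) :=
          apply_le_of_abs_le_abs_snd hN hneg
            (abs_le_abs_of_nonneg (apply_nonneg _ _) (map_add_le_add r x y))
      _ ≤ N (p x, r x) + N (p y, r y) := hN.1 (p x, r x) (p y, r y)
  · calc N (p (c • x), r (c • x)) = N (|c| • (p x, r x)) := by
          simp only [map_smul_eq_mul, Real.norm_eq_abs, Prod.smul_mk, smul_eq_mul]
      _ = |c| * N (p x, r x) := by rw [hN.2.1, abs_abs]
  · obtain ⟨hp, hr⟩ := Prod.mk_eq_zero.1 (hN.2.2 _ hx)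
    exact hpr x hp hr

theorem isEquivNorm_comp_seminorms {X : Type*} [NormedAddCommGroup X] [NormedSpace ℝ X]
    (hN : IsNorm N) (hneg : ∀ s t : ℝ, N (-s, t) = N (s, t))
    (hswap : ∀ s t : ℝ, N (s, t) = N (t, s)) (h0 : N (1, 0) = 1) (p r : Seminorm ℝ X)
    {Cp Cr α β : ℝ} (hCp : 0 ≤ Cp) (hCr : 0 ≤ Cr) (hp : ∀ x, p x ≤ Cp * ‖x‖)
    (hr : ∀ x, r x ≤ Cr * ‖x‖) (hα : 0 ≤ α) (hβ : 0 ≤ β)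
    (hx : ∀ x, ‖x‖ ≤ α * p x + β * r x) : IsEquivNorm fun x => N (p x, r x) := by
  refine ⟨(α + β + 1)⁻¹, Cp + Cr + 1, by positivity, by positivity, fun x => ⟨?_, ?_⟩⟩
  · have hpN : p x ≤ N (p x, r x) := (le_abs_self _).trans (abs_fst_le hN hneg h0 _ _)
    have hrN : r x ≤ N (p x, r x) := (le_abs_self _).trans (abs_snd_le hN hneg hswap h0 _ _)
    rw [inv_mul_le_iff₀ (by positivity)]
    nlinarith [hx x, apply_nonneg p x]
  · calc N (p x, r x) ≤ |p x| + |r x| := apply_le_abs_add_abs hN hswap h0 _ _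
      _ = p x + r x := by rw [abs_of_nonneg (apply_nonneg p x), abs_of_nonneg (apply_nonneg r x)]
      _ ≤ Cp * ‖x‖ + Cr * ‖x‖ := add_le_add (hp x) (hr x)
      _ ≤ (Cp + Cr + 1) * ‖x‖ := by nlinarith [norm_nonneg x]

section Smooth

variable {X : Type*} [NormedAddCommGroup X] [NormedSpace ℝ X] {n : WithTop ℕ∞} {f g : X → ℝ}
  {z : X}

theorem contDiffAt_comp_of_two_mul_lt (hN : IsNorm N) (hneg : ∀ s t : ℝ, N (-s, t) = N (s, t))
    (hswap : ∀ s t : ℝ, N (s, t) = N (t, s))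
    (hval : N (1, -(1 / 2)) = 1 ∧ N (1, 0) = 1 ∧ N (1, 1 / 2) = 1)
    (hf : Continuous f) (hg : Continuous g) (hgd : ContDiffAt ℝ n g z)
    (hz : 2 * |f z| < g z) : ContDiffAt ℝ n (fun x => N (f x, g x)) z := by
  refine hgd.congr_of_eventuallyEq ?_
  filter_upwards [(continuous_const.mul hf.abs).continuousAt.eventually_lt hg.continuousAt hz]
    with x hx
  exact apply_eq_snd hN hneg hswap hval hx.le

theorem contDiffAt_comp (hN : IsNorm N) (hneg : ∀ s t : ℝ, N (-s, t) = N (s, t))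
    (hswap : ∀ s t : ℝ, N (s, t) = N (t, s))
    (hval : N (1, -(1 / 2)) = 1 ∧ N (1, 0) = 1 ∧ N (1, 1 / 2) = 1)
    (hNsmooth : ContDiffOn ℝ n N {0}ᶜ) (hf : Continuous f) (hg : Continuous g)
    (hf0 : ∀ x, 0 ≤ f x) (hg0 : ∀ x, 0 ≤ g x) (hfd : ∀ x, f x ≠ 0 → ContDiffAt ℝ n f x)
    (hgd : ∀ x, g x ≠ 0 → ContDiffAt ℝ n g x) (hz : (f z, g z) ≠ 0) :
    ContDiffAt ℝ n (fun x => N (f x, g x)) z := by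
  rcases lt_or_ge (2 * f z) (g z) with hfg | hfg
  · rw [← abs_of_nonneg (hf0 z)] at hfg
    exact contDiffAt_comp_of_two_mul_lt hN hneg hswap hval hf hg
      (hgd z (((mul_nonneg zero_le_two (abs_nonneg _)).trans_lt hfg).ne')) hfg
  rcases lt_or_ge (2 * g z) (f z) with hgf | hgf
  · rw [← abs_of_nonneg (hg0 z)] at hgf
    simp_rw [hswap (f _)]
    exact contDiffAt_comp_of_two_mul_lt hN hneg hswap hval hg hf
      (hfd z (((mul_nonneg zero_le_two (abs_nonneg _)).trans_lt hgf).ne')) hgf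
  have hfz : f z ≠ 0 := fun h => hz (Prod.mk_eq_zero.2 ⟨h, by linarith [hg0 z]⟩)
  have hgz : g z ≠ 0 := fun h => hz (Prod.mk_eq_zero.2 ⟨by linarith [hf0 z], h⟩)
  exact (hNsmooth.contDiffAt (isOpen_compl_singleton.mem_nhds hz)).comp z
    ((hfd z hfz).prodMk (hgd z hgz))

end Smooth

end Planar

end IsNorm

theorem contDiffAt_norm_comp {X Y : Type*} [NormedAddCommGroup X] [NormedSpace ℝ X]
    [NormedAddCommGroup Y] [NormedSpace ℝ Y] {n : WithTop ℕ∞}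
    (hY : ContDiffOn ℝ n (fun y : Y => ‖y‖) {0}ᶜ) (L : X →L[ℝ] Y) {x : X} (hx : L x ≠ 0) :
    ContDiffAt ℝ n (fun z => ‖L z‖) x :=
  (hY.contDiffAt (isOpen_compl_singleton.mem_nhds hx)).comp x L.contDiff.contDiffAt

theorem norm_le_norm_proj_add_mul_norm_mk {X : Type*} [NormedAddCommGroup X] [NormedSpace ℝ X]
    {E : Submodule ℝ X} (P : X →L[ℝ] X) (hPid : ∀ e ∈ E, P e = e) (x : X) :
    ‖x‖ ≤ ‖P x‖ + (1 + ‖P‖) * ‖(Submodule.Quotient.mk x : X ⧸ E)‖ := by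
  have hdist : ∀ y ∈ E, ‖x‖ ≤ ‖P x‖ + (1 + ‖P‖) * dist x y := fun y hy =>
    calc ‖x‖ = ‖P x + ((x - y) - P (x - y))‖ := by rw [map_sub, hPid y hy]; abel_nf
      _ ≤ ‖P x‖ + (‖x - y‖ + ‖P (x - y)‖) := by grw [norm_add_le, norm_sub_le]
      _ ≤ ‖P x‖ + (‖x - y‖ + ‖P‖ * ‖x - y‖) := by grw [P.le_opNorm (x - y)]
      _ = ‖P x‖ + (1 + ‖P‖) * dist x y := by rw [dist_eq_norm]; ring
  have hmk : ‖(Submodule.Quotient.mk x : X ⧸ E)‖ = Metric.infDist x E :=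
    QuotientAddGroup.norm_mk (S := E.toAddSubgroup) x
  rw [← sub_le_iff_le_add', ← div_le_iff₀' (by positivity), hmk,
    Metric.le_infDist ⟨0, E.zero_mem⟩]
  intro y hy
  rw [div_le_iff₀' (by positivity), sub_le_iff_le_add']
  exact hdist y hy

theorem combined_norm_smooth_general
    {X : Type*} [NormedAddCommGroup X] [NormedSpace ℝ X]
    (k : ℕ∞)
    (hsmooth : ContDiffOn ℝ k (fun z : X => ‖z‖) {(0 : X)}ᶜ)
    (E : Submodule ℝ X) [IsClosed (E : Set X)]
    (P : X →L[ℝ] X) (hPid : ∀ e ∈ E, P e = e)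
    (hqsmooth : ContDiffOn ℝ k (fun y : X ⧸ E => ‖y‖) {(0 : X ⧸ E)}ᶜ)
    (N : ℝ × ℝ → ℝ) (hNnorm : IsNorm N)
    (hNsmooth : ContDiffOn ℝ (⊤ : ℕ∞) N {(0 : ℝ × ℝ)}ᶜ)
    (hNsym : ∀ a b : ℝ, N (-a, b) = N (a, b) ∧ N (a, b) = N (b, a))
    (hNval : N (1, -(1 / 2)) = 1 ∧ N (1, 0) = 1 ∧ N (1, 1 / 2) = 1)
    (a : ℝ) (ha : 0 < a) :
    IsNorm (fun z : X => N (a * ‖P z‖, ‖(Submodule.Quotient.mk z : X ⧸ E)‖)) ∧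
    IsEquivNorm (fun z : X => N (a * ‖P z‖, ‖(Submodule.Quotient.mk z : X ⧸ E)‖)) ∧
    ContDiffOn ℝ k (fun z : X => N (a * ‖P z‖, ‖(Submodule.Quotient.mk z : X ⧸ E)‖))
      {(0 : X)}ᶜ ∧
    ∀ z : X, ‖(Submodule.Quotient.mk z : X ⧸ E)‖ ≤
      N (a * ‖P z‖, ‖(Submodule.Quotient.mk z : X ⧸ E)‖) := by
  have hneg := fun s t => (hNsym s t).1
  have hswap := fun s t => (hNsym s t).2
  let c : NNReal := ⟨a, ha.le⟩
  let p : Seminorm ℝ X := c • (normSeminorm ℝ X).comp P.toLinearMap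
  let r : Seminorm ℝ X := (normSeminorm ℝ (X ⧸ E)).comp E.mkQ
  have hpr : ∀ z, p z = 0 → r z = 0 → z = 0 := fun z hp hr => by
    have hPz : P z = 0 := norm_eq_zero.1 ((mul_eq_zero.1 hp).resolve_left ha.ne')
    rw [← hPid z ((Submodule.Quotient.mk_eq_zero E).1 (norm_eq_zero.1 hr)), hPz]
  refine ⟨hNnorm.comp_seminorms hneg hswap p r hpr, ?_, fun z hz => ?_,
    fun z => (le_abs_self _).trans (hNnorm.abs_snd_le hneg hswap hNval.2.1 _ _)⟩
  · refine hNnorm.isEquivNorm_comp_seminorms hneg hswap hNval.2.1 p r (Cp := a * ‖P‖) (Cr := 1)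
      (α := a⁻¹) (β := 1 + ‖P‖) (by positivity) zero_le_one (fun x => ?_) (fun x => ?_)
      (inv_nonneg.2 ha.le) (by positivity) (fun x => ?_)
    · exact (mul_le_mul_of_nonneg_left (P.le_opNorm x) ha.le).trans_eq (mul_assoc _ _ _).symm
    · exact (Submodule.Quotient.norm_mk_le E x).trans_eq (one_mul _).symm
    · change ‖x‖ ≤ a⁻¹ * (a * ‖P x‖) + (1 + ‖P‖) * ‖(Submodule.Quotient.mk x : X ⧸ E)‖
      rw [inv_mul_cancel_left₀ ha.ne']
      exact norm_le_norm_proj_add_mul_norm_mk P hPid x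
  · refine (hNnorm.contDiffAt_comp hneg hswap hNval (hNsmooth.of_le (by exact_mod_cast le_top))
      (continuous_const.mul P.continuous.norm) E.mkQL.continuous.norm
      (apply_nonneg p) (apply_nonneg r) (fun x hx => ?_) (fun x hx => ?_) ?_).contDiffWithinAt
    · exact contDiffAt_const.mul
        (contDiffAt_norm_comp hsmooth P fun h => hx (by simp [h]))
    · exact contDiffAt_norm_comp hqsmooth E.mkQL fun h => hx (by simp [h])
    · exact fun h => hz (hpr z (congrArg Prod.fst h) (congrArg Prod.snd h))

/-- Combining a smooth planar norm `N` with the projection onto a finite-dimensional subspace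
`E` and the quotient norm of `X/E` yields an equivalent `C^k`-smooth norm
`N_a(x) = N(a‖P x‖, ‖q x‖)` dominating the quotient seminorm. -/
theorem combined_norm_smooth
    {X : Type*} [NormedAddCommGroup X] [NormedSpace ℝ X] [CompleteSpace X]
    (k : ℕ∞)
    (hsmooth : ContDiffOn ℝ k (fun z : X => ‖z‖) {(0 : X)}ᶜ)
    (E : Submodule ℝ X) [FiniteDimensional ℝ E] [IsClosed (E : Set X)]
    (P : X →L[ℝ] X) (hPmem : ∀ z : X, P z ∈ E) (hPid : ∀ e ∈ E, P e = e)
    (hqsmooth : ContDiffOn ℝ k (fun y : X ⧸ E => ‖y‖) {(0 : X ⧸ E)}ᶜ)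
    (N : ℝ × ℝ → ℝ) (hNnorm : IsNorm N)
    (hNsmooth : ContDiffOn ℝ (⊤ : ℕ∞) N {(0 : ℝ × ℝ)}ᶜ)
    (hNsym : ∀ a b : ℝ, N (-a, b) = N (a, b) ∧ N (a, b) = N (b, a))
    (hNval : N (1, -(1 / 2)) = 1 ∧ N (1, 0) = 1 ∧ N (1, 1 / 2) = 1)
    (a : ℝ) (ha : 0 < a) :
    IsNorm (fun z : X => N (a * ‖P z‖, ‖(Submodule.Quotient.mk z : X ⧸ E)‖)) ∧
    IsEquivNorm (fun z : X => N (a * ‖P z‖, ‖(Submodule.Quotient.mk z : X ⧸ E)‖)) ∧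
    ContDiffOn ℝ k (fun z : X => N (a * ‖P z‖, ‖(Submodule.Quotient.mk z : X ⧸ E)‖))
      {(0 : X)}ᶜ ∧
    ∀ z : X, ‖(Submodule.Quotient.mk z : X ⧸ E)‖ ≤
      N (a * ‖P z‖, ‖(Submodule.Quotient.mk z : X ⧸ E)‖) :=
  combined_norm_smooth_general k hsmooth E P hPid hqsmooth N hNnorm hNsmooth hNsym hNval a ha
end

section
/- Let (X, ‖·‖) be a real Banach space, E ⊂ X a finite-dimensional subspace with bounded linear projection P : X → E and quotient map q : X → X/E, and let N be a norm on ℝ² satisfying N(−a, b) = N(a, b) = N(b, a) for all a, b ∈ ℝ and N(1, 0) = 1. For a > 0 let N_a be the norm on X given by N_a(x) = N(a·‖P(x)‖, ‖q(x)‖_{X/E}), and let N_a° ⊂ X* denote its polar unit ball {f ∈ X* : |f(x)| ≤ 1 whenever N_a(x) ≤ 1}. Then the Hausdorff distance (with respect to the dual norm on X*) between N_a° and B_{X*} ∩ E^⊥ tends to 0 as a → 0⁺, where E^⊥ = {f ∈ X* : f(e) = 0 for all e ∈ E} and B_{X*} is the closed unit ball of X*. -/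
open Filter Topology

structure IsSymmetricNormalizedNorm (N : ℝ × ℝ → ℝ) : Prop where
  isNorm : IsNorm N
  neg_fst : ∀ a b : ℝ, N (-a, b) = N (a, b)
  swap : ∀ a b : ℝ, N (a, b) = N (b, a)
  one_zero : N (1, 0) = 1

namespace IsSymmetricNormalizedNorm

variable {N : ℝ × ℝ → ℝ}

theorem apply_mk_zero (hN : IsSymmetricNormalizedNorm N) (t : ℝ) : N (t, 0) = |t| := by
  simpa [hN.one_zero] using hN.isNorm.2.1 t (1, 0)

theorem apply_zero_mk (hN : IsSymmetricNormalizedNorm N) (t : ℝ) : N (0, t) = |t| := by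
  rw [hN.swap, hN.apply_mk_zero]

theorem abs_le_apply (hN : IsSymmetricNormalizedNorm N) (s t : ℝ) : |t| ≤ N (s, t) := by
  have h : ((0 : ℝ), 2 * t) = (s, t) + (-s, t) := by ext <;> simp; ring
  have := hN.isNorm.1 (s, t) (-s, t)
  rw [← h, hN.apply_zero_mk, hN.neg_fst, abs_mul, abs_two] at this
  linarith

end IsSymmetricNormalizedNorm

theorem abs_apply_le_of_forall_le_one {V : Type*} [AddCommGroup V] [Module ℝ V] {φ : V → ℝ}
    (hφ₀ : ∀ z, 0 ≤ φ z) (hφ : ∀ c : ℝ, 0 < c → ∀ z, φ (c • z) = c * φ z)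
    {f : V →ₗ[ℝ] ℝ} (hf : ∀ z, φ z ≤ 1 → |f z| ≤ 1) (z : V) : |f z| ≤ φ z := by
  refine le_of_forall_gt_imp_ge_of_dense fun t ht => ?_
  have ht₀ : 0 < t := (hφ₀ z).trans_lt ht
  have h := hf (t⁻¹ • z) (by rw [hφ _ (inv_pos.2 ht₀), inv_mul_le_one₀ ht₀]; exact ht.le)
  rwa [map_smul, smul_eq_mul, abs_mul, abs_inv, abs_of_pos ht₀, inv_mul_le_one₀ ht₀] at h

theorem abs_apply_le_opNorm_mul_norm_mk {X : Type*} [SeminormedAddCommGroup X]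
    [NormedSpace ℝ X] {E : Submodule ℝ X} {g : StrongDual ℝ X} (hg : ∀ e ∈ E, g e = 0)
    (z : X) : |g z| ≤ ‖g‖ * ‖(Submodule.Quotient.mk z : X ⧸ E)‖ := by
  rcases (norm_nonneg g).eq_or_lt' with h | h
  · simpa [h] using g.le_opNorm z
  · rw [← div_le_iff₀' h]
    refine QuotientAddGroup.le_norm_iff.2 fun m hm => ?_
    have hzm : g z = g m := by
      rw [← sub_eq_zero, ← map_sub]
      exact hg _ ((Submodule.Quotient.eq E).1 hm.symm)
    rw [div_le_iff₀' h, hzm, ← Real.norm_eq_abs]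
    exact g.le_opNorm m

section CombinedNorm

variable {X : Type*} [NormedAddCommGroup X] [NormedSpace ℝ X]

noncomputable def combinedNorm (E : Submodule ℝ X) (P : X →L[ℝ] X) (N : ℝ × ℝ → ℝ) (a : ℝ) (z : X) : ℝ :=
  N (a * ‖P z‖, ‖(Submodule.Quotient.mk z : X ⧸ E)‖)

variable {E : Submodule ℝ X} {P : X →L[ℝ] X} {N : ℝ × ℝ → ℝ}

theorem combinedNorm_smul (hN : IsNorm N) {c : ℝ} (hc : 0 < c) (a : ℝ) (z : X) :
    combinedNorm E P N a (c • z) = c * combinedNorm E P N a z := by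
  have h : (a * ‖P (c • z)‖, ‖(Submodule.Quotient.mk (c • z) : X ⧸ E)‖)
      = c • (a * ‖P z‖, ‖(Submodule.Quotient.mk z : X ⧸ E)‖) := by
    ext <;> simp [Submodule.Quotient.mk_smul, norm_smul, abs_of_pos hc]; ring
  rw [combinedNorm, h, hN.2.1, abs_of_pos hc, combinedNorm]

theorem norm_mk_le_combinedNorm (hN : IsSymmetricNormalizedNorm N) (a : ℝ) (z : X) :
    ‖(Submodule.Quotient.mk z : X ⧸ E)‖ ≤ combinedNorm E P N a z := by
  simpa [combinedNorm] using hN.abs_le_apply (a * ‖P z‖) ‖(Submodule.Quotient.mk z : X ⧸ E)‖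

theorem combinedNorm_of_mem (hN : IsSymmetricNormalizedNorm N) (hPid : ∀ e ∈ E, P e = e)
    {a : ℝ} (ha : 0 ≤ a) {e : X} (he : e ∈ E) : combinedNorm E P N a e = a * ‖e‖ := by
  rw [combinedNorm, hPid e he, (Submodule.Quotient.mk_eq_zero E).2 he, norm_zero,
    hN.apply_mk_zero, abs_of_nonneg (by positivity)]

theorem combinedNorm_sub_apply (hN : IsSymmetricNormalizedNorm N) (hPmem : ∀ z, P z ∈ E)
    (hPid : ∀ e ∈ E, P e = e) (a : ℝ) (z : X) :
    combinedNorm E P N a (z - P z) = ‖(Submodule.Quotient.mk z : X ⧸ E)‖ := by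
  have hP : P (z - P z) = 0 := by rw [map_sub, hPid _ (hPmem z), sub_self]
  have hq : (Submodule.Quotient.mk (z - P z) : X ⧸ E) = Submodule.Quotient.mk z := by
    rw [Submodule.Quotient.mk_sub, (Submodule.Quotient.mk_eq_zero E).2 (hPmem z), sub_zero]
  rw [combinedNorm, hP, hq, norm_zero, mul_zero, hN.apply_zero_mk, abs_norm]

theorem abs_apply_le_combinedNorm (hN : IsSymmetricNormalizedNorm N) {a : ℝ}
    {f : StrongDual ℝ X} (hf : ∀ z, combinedNorm E P N a z ≤ 1 → |f z| ≤ 1) (z : X) :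
    |f z| ≤ combinedNorm E P N a z :=
  abs_apply_le_of_forall_le_one (φ := combinedNorm E P N a) (f := (f : X →ₗ[ℝ] ℝ))
    (fun z => (norm_nonneg _).trans (norm_mk_le_combinedNorm hN a z))
    (fun _ hc z => combinedNorm_smul hN.isNorm hc a z) hf z

theorem exists_mem_annihilator_dist_le (hN : IsSymmetricNormalizedNorm N)
    (hPmem : ∀ z, P z ∈ E) (hPid : ∀ e ∈ E, P e = e) {a : ℝ} (ha : 0 ≤ a)
    {f : StrongDual ℝ X} (hf : ∀ z, combinedNorm E P N a z ≤ 1 → |f z| ≤ 1) :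
    ∃ g ∈ Metric.closedBall (0 : StrongDual ℝ X) 1 ∩ {g | ∀ e ∈ E, g e = 0},
      dist f g ≤ a * ‖P‖ := by
  have hfN := abs_apply_le_combinedNorm hN hf
  refine ⟨f - f.comp P, ⟨?_, fun e he => by simp [hPid e he]⟩, ?_⟩
  · rw [mem_closedBall_zero_iff]
    refine ContinuousLinearMap.opNorm_le_bound _ zero_le_one fun z => ?_
    calc ‖(f - f.comp P) z‖ = |f (z - P z)| := by simp
      _ ≤ ‖(Submodule.Quotient.mk z : X ⧸ E)‖ :=
        (hfN _).trans_eq (combinedNorm_sub_apply hN hPmem hPid a z)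
      _ ≤ 1 * ‖z‖ := by rw [one_mul]; exact Submodule.Quotient.norm_mk_le E z
  · rw [dist_eq_norm, sub_sub_cancel]
    refine ContinuousLinearMap.opNorm_le_bound _ (by positivity) fun z => ?_
    calc ‖f (P z)‖ ≤ a * ‖P z‖ := (hfN _).trans_eq (combinedNorm_of_mem hN hPid ha (hPmem z))
      _ ≤ a * (‖P‖ * ‖z‖) := by gcongr; exact P.le_opNorm z
      _ = a * ‖P‖ * ‖z‖ := by ring

theorem abs_apply_le_one_of_mem_annihilator (hN : IsSymmetricNormalizedNorm N) {a : ℝ}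
    {g : StrongDual ℝ X}
    (hg : g ∈ Metric.closedBall (0 : StrongDual ℝ X) 1 ∩ {g | ∀ e ∈ E, g e = 0})
    {z : X} (hz : combinedNorm E P N a z ≤ 1) : |g z| ≤ 1 :=
  calc |g z| ≤ ‖g‖ * ‖(Submodule.Quotient.mk z : X ⧸ E)‖ :=
        abs_apply_le_opNorm_mul_norm_mk hg.2 z
    _ ≤ 1 * 1 := mul_le_mul (mem_closedBall_zero_iff.1 hg.1)
        ((norm_mk_le_combinedNorm hN a z).trans hz) (norm_nonneg _) zero_le_one
    _ = 1 := one_mul 1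

theorem hausdorffDist_polar_combinedNorm_le (hN : IsSymmetricNormalizedNorm N)
    (hPmem : ∀ z, P z ∈ E) (hPid : ∀ e ∈ E, P e = e) {a : ℝ} (ha : 0 ≤ a) :
    Metric.hausdorffDist {f : StrongDual ℝ X | ∀ z, combinedNorm E P N a z ≤ 1 → |f z| ≤ 1}
      (Metric.closedBall (0 : StrongDual ℝ X) 1 ∩ {g | ∀ e ∈ E, g e = 0}) ≤ a * ‖P‖ :=
  Metric.hausdorffDist_le_of_mem_dist (by positivity)
    (fun _ hf => exists_mem_annihilator_dist_le hN hPmem hPid ha hf)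
    (fun g hg => ⟨g, fun _ => abs_apply_le_one_of_mem_annihilator hN hg,
      by rw [dist_self]; positivity⟩)

end CombinedNorm

theorem polar_of_combined_norm_tendsto_general
    {X : Type*} [NormedAddCommGroup X] [NormedSpace ℝ X]
    (E : Submodule ℝ X)
    (P : X →L[ℝ] X) (hPmem : ∀ z : X, P z ∈ E) (hPid : ∀ e ∈ E, P e = e)
    (N : ℝ × ℝ → ℝ) (hNnorm : IsNorm N)
    (hNsym : ∀ a b : ℝ, N (-a, b) = N (a, b) ∧ N (a, b) = N (b, a))
    (hNval : N (1, 0) = 1)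
    (Na : ℝ → X → ℝ)
    (hNa : ∀ (a : ℝ) (z : X),
      Na a z = N (a * ‖P z‖, ‖(Submodule.Quotient.mk z : X ⧸ E)‖)) :
    Tendsto (fun a : ℝ =>
        Metric.hausdorffDist
          {f : StrongDual ℝ X | ∀ z : X, Na a z ≤ 1 → |f z| ≤ 1}
          (Metric.closedBall (0 : StrongDual ℝ X) 1 ∩
            {f : StrongDual ℝ X | ∀ e ∈ E, f e = 0}))
      (𝓝[>] (0 : ℝ)) (𝓝 0) := by
  obtain rfl : Na = combinedNorm E P N := funext₂ hNa
  have hN : IsSymmetricNormalizedNorm N :=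
    ⟨hNnorm, fun a b => (hNsym a b).1, fun a b => (hNsym a b).2, hNval⟩
  have hlim : Tendsto (fun a : ℝ => a * ‖P‖) (𝓝[>] 0) (𝓝 0) :=
    ((continuous_mul_const ‖P‖).tendsto' 0 0 (zero_mul _)).mono_left nhdsWithin_le_nhds
  refine squeeze_zero' (Eventually.of_forall fun _ => Metric.hausdorffDist_nonneg) ?_ hlim
  filter_upwards [self_mem_nhdsWithin] with a ha
  exact hausdorffDist_polar_combinedNorm_le hN hPmem hPid (le_of_lt ha)

/-- As `a → 0⁺`, the polar unit balls of the combined norms `N_a(x) = N(a‖P x‖, ‖q x‖)`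
converge in Hausdorff distance to `B_{X*} ∩ E^⊥`. -/
theorem polar_of_combined_norm_tendsto
    {X : Type*} [NormedAddCommGroup X] [NormedSpace ℝ X] [CompleteSpace X]
    (E : Submodule ℝ X) [FiniteDimensional ℝ E] [IsClosed (E : Set X)]
    (P : X →L[ℝ] X) (hPmem : ∀ z : X, P z ∈ E) (hPid : ∀ e ∈ E, P e = e)
    (N : ℝ × ℝ → ℝ) (hNnorm : IsNorm N)
    (hNsym : ∀ a b : ℝ, N (-a, b) = N (a, b) ∧ N (a, b) = N (b, a))
    (hNval : N (1, 0) = 1)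
    (Na : ℝ → X → ℝ)
    (hNa : ∀ (a : ℝ) (z : X),
      Na a z = N (a * ‖P z‖, ‖(Submodule.Quotient.mk z : X ⧸ E)‖)) :
    Tendsto (fun a : ℝ =>
        Metric.hausdorffDist
          {f : StrongDual ℝ X | ∀ z : X, Na a z ≤ 1 → |f z| ≤ 1}
          (Metric.closedBall (0 : StrongDual ℝ X) 1 ∩
            {f : StrongDual ℝ X | ∀ e ∈ E, f e = 0}))
      (𝓝[>] (0 : ℝ)) (𝓝 0) :=
  polar_of_combined_norm_tendsto_general E P hPmem hPid N hNnorm hNsym hNval Na hNa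
end

section
/- Let X be a separable real Banach space and let (x_i)_{i∈ℕ} be a sequence in X whose linear span is dense in X; for n ∈ ℕ let M_n = {f ∈ X* : f(x_i) = 0 for all 1 ≤ i ≤ n}. Let F ⊂ X* be weak-* compact, let (g_j)_{j∈ℕ} be a sequence in F, let (n_j) be positive integers with n_j → ∞, let ε > 0, and let (K_j)_{j∈ℕ} be uniformly norm-bounded weak-* compact subsets of X* such that the Hausdorff distance (in dual norm) between K_j and B_{X*} ∩ M_{n_j} tends to 0 as j → ∞. If the set D = ∪_{j∈ℕ} (g_j + ε·K_j) contains F, then D is weak-* compact. -/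
/-!
Since `F` is weak-* compact it is norm bounded (uniform boundedness), hence so is `D`, and by
Banach–Alaoglu it suffices to show that `D` is weak-* closed. A weak-* limit point `φ` of
`D = ⋃ⱼ Aⱼ` either lies in the closure of finitely many of the compact pieces
`Aⱼ = g j + ε • K j`, or it is a limit of points `g j + ε k` with `k ∈ K j` and `j → ∞`. In the
second case the `k` are bounded and asymptotically annihilate every `x i`, so they tend weak-* to
`0`; thus `φ` is a limit of the `g j` and belongs to the weak-* closed set `F ⊆ D`.
-/

open Filter Topology Pointwise

open Bornology Metric Set Submodule StrongDual

theorem mem_iUnion_or_forall_mem_closure_iUnion_ge {α : Type*} [TopologicalSpace α]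
    {A : ℕ → Set α} (hA : ∀ j, IsClosed (A j)) {a : α} (ha : a ∈ closure (⋃ j, A j)) :
    a ∈ ⋃ j, A j ∨ ∀ N, a ∈ closure (⋃ j ≥ N, A j) := by
  refine or_iff_not_imp_right.mpr fun h => ?_
  obtain ⟨N, hN⟩ := not_forall.mp h
  have hsplit : ⋃ j, A j = (⋃ j < N, A j) ∪ ⋃ j ≥ N, A j := by
    ext b
    simp only [mem_iUnion, mem_union, exists_prop]
    grind
  have hhead : IsClosed (⋃ j < N, A j) := (finite_lt_nat N).isClosed_biUnion fun j _ => hA j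
  rw [hsplit, closure_union, hhead.closure_eq] at ha
  exact iUnion₂_subset (fun j _ => subset_iUnion A j) (ha.resolve_right hN)

section

variable {𝕜 X : Type*} [NontriviallyNormedField 𝕜] [NormedAddCommGroup X] [NormedSpace 𝕜 X]

theorem StrongDual.isBounded_toWeakDual_image_iff {s : Set (StrongDual 𝕜 X)} :
    IsBounded (toWeakDual '' s) ↔ IsBounded s := by
  rw [← WeakDual.isBounded_toWeakDual_preimage_iff_isBounded,
    preimage_image_eq s toWeakDual.injective]

theorem StrongDual.isBounded_of_isCompact_toWeakDual_image [CompleteSpace X]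
    {s : Set (StrongDual 𝕜 X)} (hs : IsCompact (toWeakDual '' s)) : IsBounded s :=
  isBounded_toWeakDual_image_iff.mp <| WeakDual.isBounded_iff_isVonNBounded.mpr <|
    hs.isVonNBounded 𝕜

theorem StrongDual.isCompact_toWeakDual_image_singleton_add_smul {K : Set (StrongDual 𝕜 X)}
    (hK : IsCompact (toWeakDual '' K)) (g : StrongDual 𝕜 X) (c : 𝕜) :
    IsCompact (toWeakDual '' ({g} + c • K)) := by
  have himage : toWeakDual '' ({g} + c • K) =
      (fun w => toWeakDual g + c • w) '' (toWeakDual '' K) := by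
    rw [singleton_add, ← image_smul, image_image, image_image, image_image]
    rfl
  exact himage ▸ hK.image (continuous_const.add (continuous_const_smul c))

/-- A norm-bounded family is equicontinuous, so the set where it converges pointwise is closed. -/
theorem StrongDual.tendsto_toWeakDual_zero_of_dense_span {ι : Type*} {l : Filter ι}
    {k : ι → StrongDual 𝕜 X} {C : ℝ} (hk : ∀ a, ‖k a‖ ≤ C) {s : Set X}
    (hs : Dense (span 𝕜 s : Set X)) (hks : ∀ y ∈ s, Tendsto (fun a => k a y) l (𝓝 0)) :
    Tendsto (fun a => toWeakDual (k a)) l (𝓝 0) := by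
  have hequi : Equicontinuous fun a => (k a : X → 𝕜) :=
    ((NormedSpace.equicontinuous_TFAE k).out 5 1).mp (by exact ⟨C, hk⟩)
  have hclosed : IsClosed {z : X | Tendsto (fun a => k a z) l (𝓝 0)} :=
    hequi.isClosed_setOfPred_tendsto (f := 0) continuous_const
  have hspan : (span 𝕜 s : Set X) ⊆ {z : X | Tendsto (fun a => k a z) l (𝓝 0)} := by
    intro z hz
    induction hz using Submodule.span_induction with
    | mem y hy => exact hks y hy
    | zero => simpa using tendsto_const_nhds
    | add y w _ _ hy hw => simpa using hy.add hw
    | smul c y _ hy => simpa using hy.const_smul c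
  rw [tendsto_iff_forall_eval_tendsto_topDualPairing]
  intro z
  exact hclosed.closure_subset_iff.mpr hspan (hs.closure_eq ▸ mem_univ z)

/-- The paper's `M_m`, with the sequence `x` indexed from `0`. -/
def annihilatorUpTo (x : ℕ → X) (m : ℕ) : Set (StrongDual 𝕜 X) := {f | ∀ i < m, f (x i) = 0}

theorem zero_mem_annihilatorUpTo (x : ℕ → X) (m : ℕ) :
    (0 : StrongDual 𝕜 X) ∈ annihilatorUpTo x m :=
  fun _ _ => rfl

theorem StrongDual.norm_apply_le_infDist_mul (f : StrongDual 𝕜 X) {S : Set (StrongDual 𝕜 X)}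
    (hS : S.Nonempty) {y : X} (hy : ∀ u ∈ S, u y = 0) : ‖f y‖ ≤ infDist f S * ‖y‖ := by
  rcases eq_or_ne y 0 with rfl | hy0
  · simp
  have hpos : 0 < ‖y‖ := norm_pos_iff.mpr hy0
  rw [← div_le_iff₀ hpos, le_infDist hS]
  intro u hu
  rw [div_le_iff₀ hpos, dist_eq_norm]
  calc ‖f y‖ = ‖(f - u) y‖ := by simp [hy u hu]
    _ ≤ ‖f - u‖ * ‖y‖ := (f - u).le_opNorm y

theorem tendsto_apply_of_tendsto_infDist_annihilatorUpTo {ι : Type*} {l : Filter ι}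
    {k : ι → StrongDual 𝕜 X} {m : ι → ℕ} {x : ℕ → X} (hm : Tendsto m l atTop)
    (hd : Tendsto (fun a => infDist (k a) (annihilatorUpTo x (m a))) l (𝓝 0)) (i : ℕ) :
    Tendsto (fun a => k a (x i)) l (𝓝 0) := by
  refine squeeze_zero_norm' ?_ (by simpa using hd.mul_const ‖x i‖)
  filter_upwards [hm.eventually_gt_atTop i] with a hi
  exact (k a).norm_apply_le_infDist_mul ⟨0, zero_mem_annihilatorUpTo x (m a)⟩ fun u hu => hu i hi

theorem infDist_annihilatorUpTo_le_hausdorffDist {K : Set (StrongDual 𝕜 X)} (hK : IsBounded K)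
    {k : StrongDual 𝕜 X} (hk : k ∈ K) (x : ℕ → X) (m : ℕ) :
    infDist k (annihilatorUpTo x m) ≤ hausdorffDist K (closedBall 0 1 ∩ annihilatorUpTo x m) := by
  have hzero : (0 : StrongDual 𝕜 X) ∈ closedBall 0 1 ∩ annihilatorUpTo x m :=
    ⟨mem_closedBall_self zero_le_one, zero_mem_annihilatorUpTo x m⟩
  calc infDist k (annihilatorUpTo x m)
      ≤ infDist k (closedBall 0 1 ∩ annihilatorUpTo x m) :=
        infDist_le_infDist_of_subset inter_subset_right ⟨0, hzero⟩
    _ ≤ hausdorffDist K (closedBall 0 1 ∩ annihilatorUpTo x m) :=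
        infDist_le_hausdorffDist_of_mem hk <| hausdorffEDist_ne_top_of_nonempty_of_bounded
          ⟨k, hk⟩ ⟨0, hzero⟩ hK (isBounded_closedBall.subset inter_subset_left)

theorem mem_closure_range_of_forall_mem_closure_iUnion_ge {x : ℕ → X}
    (hx : Dense (span 𝕜 (range x) : Set X)) {K : ℕ → Set (StrongDual 𝕜 X)} {C : ℝ}
    (hKC : ∀ j, K j ⊆ closedBall 0 C)
    {n : ℕ → ℕ} (hn : Tendsto n atTop atTop)
    (hKH : Tendsto (fun j => hausdorffDist (K j) (closedBall 0 1 ∩ annihilatorUpTo x (n j)))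
      atTop (𝓝 0))
    (g : ℕ → StrongDual 𝕜 X) (ε : 𝕜) {φ : WeakDual 𝕜 X}
    (hφ : ∀ N, φ ∈ closure (⋃ j ≥ N, toWeakDual '' ({g j} + ε • K j))) :
    φ ∈ closure (range fun j => toWeakDual (g j)) := by
  let L : Filter {a : ℕ × StrongDual 𝕜 X // a.2 ∈ K a.1} :=
    comap (fun a => (toWeakDual (g a.1.1 + ε • a.1.2), a.1.1)) (𝓝 φ ×ˢ atTop)
  have : L.NeBot := by
    refine comap_neBot fun t ht => ?_
    obtain ⟨U, hU, V, hV, hUV⟩ := mem_prod_iff.mp ht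
    obtain ⟨N, hN⟩ := mem_atTop_sets.mp hV
    obtain ⟨_, hψU, hψ⟩ := mem_closure_iff_nhds.mp (hφ N) U hU
    simp only [mem_iUnion, mem_image, singleton_add, mem_smul_set] at hψ
    obtain ⟨j, hj, _, ⟨_, ⟨k, hk, rfl⟩, rfl⟩, rfl⟩ := hψ
    exact ⟨⟨(j, k), hk⟩, hUV ⟨hψU, hN j hj⟩⟩
  have hidx : Tendsto (fun a => a.1.1) L atTop := tendsto_snd.comp tendsto_comap
  have hsum : Tendsto (fun a => toWeakDual (g a.1.1 + ε • a.1.2)) L (𝓝 φ) :=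
    tendsto_fst.comp tendsto_comap
  have hinfDist : Tendsto (fun a => infDist a.1.2 (annihilatorUpTo x (n a.1.1))) L (𝓝 0) :=
    squeeze_zero (fun _ => infDist_nonneg)
      (fun a => infDist_annihilatorUpTo_le_hausdorffDist
        (isBounded_closedBall.subset (hKC _)) a.2 x _) (hKH.comp hidx)
  have hk : Tendsto (fun a => toWeakDual a.1.2) L (𝓝 0) :=
    tendsto_toWeakDual_zero_of_dense_span (fun a => mem_closedBall_zero_iff.mp (hKC _ a.2)) hx
      (forall_mem_range.mpr (tendsto_apply_of_tendsto_infDist_annihilatorUpTo (hn.comp hidx)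
        hinfDist))
  have hg : Tendsto (fun a => toWeakDual (g a.1.1)) L (𝓝 φ) := by
    simpa using hsum.sub (hk.const_smul ε)
  exact mem_closure_of_tendsto hg (Eventually.of_forall fun a => mem_range_self _)

end

theorem weakStar_compact_union_general
    {X : Type*} [NormedAddCommGroup X] [NormedSpace ℝ X] [CompleteSpace X]
    (x : ℕ → X)
    (hdense : closure ((Submodule.span ℝ (Set.range x) : Submodule ℝ X) : Set X) = Set.univ)
    (M : ℕ → Set (StrongDual ℝ X))
    (hM : ∀ n : ℕ, M n = {f : StrongDual ℝ X | ∀ i < n, f (x i) = 0})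
    (F : Set (StrongDual ℝ X))
    (hFcpt : IsCompact (StrongDual.toWeakDual '' F))
    (g : ℕ → StrongDual ℝ X) (hg : ∀ j : ℕ, g j ∈ F)
    (n : ℕ → ℕ) (hn : Tendsto n atTop atTop)
    (ε : ℝ)
    (K : ℕ → Set (StrongDual ℝ X))
    (hKcpt : ∀ j : ℕ, IsCompact (StrongDual.toWeakDual '' K j))
    (C : ℝ) (hKbdd : ∀ j : ℕ, K j ⊆ Metric.closedBall 0 C)
    (hKH : Tendsto (fun j : ℕ =>
        Metric.hausdorffDist (K j) (Metric.closedBall (0 : StrongDual ℝ X) 1 ∩ M (n j)))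
      atTop (𝓝 0))
    (D : Set (StrongDual ℝ X)) (hD : D = ⋃ j : ℕ, ({g j} + ε • K j))
    (hFD : F ⊆ D) :
    IsCompact (StrongDual.toWeakDual '' D) := by
  subst hD
  obtain rfl : M = annihilatorUpTo x := funext hM
  have hDbdd : IsBounded (⋃ j, {g j} + ε • K j) :=
    ((isBounded_of_isCompact_toWeakDual_image hFcpt).add (isBounded_closedBall.smul₀ ε)).subset
      (iUnion_subset fun j => add_subset_add (singleton_subset_iff.mpr (hg j))
        (smul_set_mono (hKbdd j)))
  refine WeakDual.isCompact_of_bounded_of_closed (isBounded_toWeakDual_image_iff.mpr hDbdd)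
    (isClosed_of_closure_subset fun φ hφ => ?_)
  rw [image_iUnion] at hφ ⊢
  have hpieces : ∀ j, IsClosed (toWeakDual '' ({g j} + ε • K j)) := fun j =>
    (isCompact_toWeakDual_image_singleton_add_smul (hKcpt j) (g j) ε).isClosed
  refine (mem_iUnion_or_forall_mem_closure_iUnion_ge hpieces hφ).elim id fun htail => ?_
  have hgF : range (fun j => toWeakDual (g j)) ⊆ toWeakDual '' F :=
    range_subset_iff.mpr fun j => mem_image_of_mem _ (hg j)
  have hφF : φ ∈ toWeakDual '' F :=
    hFcpt.isClosed.closure_subset_iff.mpr hgF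
      (mem_closure_range_of_forall_mem_closure_iUnion_ge (dense_iff_closure_eq.mpr hdense) hKbdd
        hn hKH g ε htail)
  exact image_iUnion ▸ image_mono hFD hφF

/-- If `F` is weak-* compact, `g j ∈ F`, `n j → ∞`, and the uniformly bounded weak-* compact
sets `K j` converge in Hausdorff distance to `B_{X*} ∩ M_{n j}`, then the union
`D = ⋃ⱼ (g j + ε K j)`, provided it contains `F`, is weak-* compact. -/
theorem weakStar_compact_union
    {X : Type*} [NormedAddCommGroup X] [NormedSpace ℝ X] [CompleteSpace X]
    [TopologicalSpace.SeparableSpace X]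
    (x : ℕ → X)
    (hdense : closure ((Submodule.span ℝ (Set.range x) : Submodule ℝ X) : Set X) = Set.univ)
    (M : ℕ → Set (StrongDual ℝ X))
    (hM : ∀ n : ℕ, M n = {f : StrongDual ℝ X | ∀ i < n, f (x i) = 0})
    (F : Set (StrongDual ℝ X))
    (hFcpt : IsCompact (StrongDual.toWeakDual '' F))
    (g : ℕ → StrongDual ℝ X) (hg : ∀ j : ℕ, g j ∈ F)
    (n : ℕ → ℕ) (hnpos : ∀ j : ℕ, 0 < n j) (hn : Tendsto n atTop atTop)
    (ε : ℝ) (hε : 0 < ε)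
    (K : ℕ → Set (StrongDual ℝ X))
    (hKcpt : ∀ j : ℕ, IsCompact (StrongDual.toWeakDual '' K j))
    (C : ℝ) (hKbdd : ∀ j : ℕ, K j ⊆ Metric.closedBall 0 C)
    (hKH : Tendsto (fun j : ℕ =>
        Metric.hausdorffDist (K j) (Metric.closedBall (0 : StrongDual ℝ X) 1 ∩ M (n j)))
      atTop (𝓝 0))
    (D : Set (StrongDual ℝ X)) (hD : D = ⋃ j : ℕ, ({g j} + ε • K j))
    (hFD : F ⊆ D) :
    IsCompact (StrongDual.toWeakDual '' D) :=
  weakStar_compact_union_general x hdense M hM F hFcpt g hg n hn ε K hKcpt C hKbdd hKH D hD hFD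
end

section
/- Let X be a real Banach space, let {(x_i, x_i*)}_{i∈ℕ} be an M-basis of X, and for n ∈ ℕ let M_n = {f ∈ X* : f(x_i) = 0 for all 1 ≤ i ≤ n}. Let F ⊂ X* be a bounded weak-* compact set such that {f(x_i) : f ∈ F} is finite for each i ∈ ℕ. Then for every h ∈ F and every n ∈ ℕ the set (h + M_n) ∩ F is both closed and open in F with the relative weak-* topology, and the family {(h + M_n) ∩ F : h ∈ F, n ∈ ℕ} is a base for the relative weak-* topology of F. -/
/-! Writing `eᵢ f = f (xᵢ)`, the trace of `h + Mₙ` on `F` is the cylinder of points of `F` that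
agree with `h` under `e₀, …, eₙ₋₁`. Each `eᵢ` is weak-* continuous and takes finitely many values
on `F`, so cylinders are clopen. The `eᵢ` separate points because the `xᵢ` span a dense subspace,
so the closed cylinders around a point decrease to that point, and compactness of `F` pushes
them into any of its neighbourhoods. -/

open Filter Topology Pointwise

section Cylinder

variable {T Y : Type*}

def cylinder (e : ℕ → T → Y) (a : T) (n : ℕ) : Set T :=
  {p | ∀ i < n, e i p = e i a}

lemma cylinder_eq_biInter (e : ℕ → T → Y) (a : T) (n : ℕ) :
    cylinder e a n = ⋂ i ∈ Finset.range n, e i ⁻¹' {e i a} := by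
  ext p
  simp [cylinder]

lemma cylinder_antitone (e : ℕ → T → Y) (a : T) : Antitone (cylinder e a) :=
  fun _ _ hmn _ hp i hi => hp i (hi.trans_le hmn)

lemma mem_cylinder_self (e : ℕ → T → Y) (a : T) (n : ℕ) : a ∈ cylinder e a n :=
  fun _ _ => rfl

lemma iInter_cylinder {e : ℕ → T → Y} (hsep : ∀ p q, (∀ i, e i p = e i q) → p = q) (a : T) :
    ⋂ n, cylinder e a n = {a} := by
  refine Set.Subset.antisymm (fun p hp => hsep p a fun i => ?_) fun p hp => ?_
  · exact Set.mem_iInter.mp hp (i + 1) i i.lt_succ_self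
  · rw [Set.mem_singleton_iff.mp hp]
    exact Set.mem_iInter.mpr (mem_cylinder_self e a)

variable [TopologicalSpace T] [TopologicalSpace Y]

lemma isClosed_cylinder [T1Space Y] {e : ℕ → T → Y} (he : ∀ i, Continuous (e i))
    (a : T) (n : ℕ) : IsClosed (cylinder e a n) := by
  rw [cylinder_eq_biInter]
  exact isClosed_biInter fun i _ => isClosed_singleton.preimage (he i)

lemma isClopen_preimage_singleton_of_finite_range [T1Space Y] {φ : T → Y} (hφ : Continuous φ)
    (hfin : (Set.range φ).Finite) (c : Y) : IsClopen (φ ⁻¹' {c}) := by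
  refine ⟨isClosed_singleton.preimage hφ, ?_⟩
  have hcompl : (φ ⁻¹' {c})ᶜ = φ ⁻¹' (Set.range φ \ {c}) := by
    ext p
    simp
  rw [← isClosed_compl_iff, hcompl]
  exact (hfin.sdiff).isClosed.preimage hφ

lemma isClopen_cylinder [T1Space Y] {e : ℕ → T → Y} (he : ∀ i, Continuous (e i))
    (hfin : ∀ i, (Set.range (e i)).Finite) (a : T) (n : ℕ) : IsClopen (cylinder e a n) := by
  rw [cylinder_eq_biInter]
  exact isClopen_biInter_finset fun i _ =>
    isClopen_preimage_singleton_of_finite_range (he i) (hfin i) (e i a)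

lemma exists_cylinder_subset_of_mem_nhds [CompactSpace T] [T1Space Y] {e : ℕ → T → Y}
    (he : ∀ i, Continuous (e i)) (hsep : ∀ p q, (∀ i, e i p = e i q) → p = q)
    {a : T} {u : Set T} (hu : u ∈ 𝓝 a) : ∃ n, cylinder e a n ⊆ u :=
  exists_subset_nhds_of_compactSpace (cylinder_antitone e a).directed_ge
    (isClosed_cylinder he a) fun p hp => by
      rw [iInter_cylinder hsep, Set.mem_singleton_iff] at hp
      rwa [hp]

theorem isTopologicalBasis_cylinder [CompactSpace T] [T1Space Y] {e : ℕ → T → Y}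
    (he : ∀ i, Continuous (e i)) (hfin : ∀ i, (Set.range (e i)).Finite)
    (hsep : ∀ p q, (∀ i, e i p = e i q) → p = q) :
    TopologicalSpace.IsTopologicalBasis {s | ∃ a n, s = cylinder e a n} := by
  refine TopologicalSpace.isTopologicalBasis_of_isOpen_of_nhds ?_ fun a u hau hu => ?_
  · rintro _ ⟨a, n, rfl⟩
    exact (isClopen_cylinder he hfin a n).isOpen
  · obtain ⟨n, hn⟩ := exists_cylinder_subset_of_mem_nhds he hsep (hu.mem_nhds hau)
    exact ⟨_, ⟨a, n, rfl⟩, mem_cylinder_self e a n, hn⟩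

end Cylinder

lemma StrongDual.mem_singleton_add_setOf_forall_eq_zero {𝕜 X : Type*}
    [NontriviallyNormedField 𝕜] [NormedAddCommGroup X] [NormedSpace 𝕜 X] (x : ℕ → X) (n : ℕ)
    (g f : StrongDual 𝕜 X) :
    f ∈ {g} + {f : StrongDual 𝕜 X | ∀ i < n, f (x i) = 0} ↔ ∀ i < n, f (x i) = g (x i) := by
  rw [Set.singleton_add]
  constructor
  · rintro ⟨d, hd, rfl⟩ i hi
    simp [hd i hi]
  · exact fun hfg => ⟨f - g, fun i hi => by simp [hfg i hi], add_sub_cancel g f⟩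

lemma WeakDual.ext_of_dense_span {𝕜 X : Type*} [NontriviallyNormedField 𝕜]
    [NormedAddCommGroup X] [NormedSpace 𝕜 X] {ι : Type*} {x : ι → X}
    (hx : Dense (Submodule.span 𝕜 (Set.range x) : Set X)) {φ ψ : WeakDual 𝕜 X}
    (h : ∀ i, φ (x i) = ψ (x i)) : φ = ψ :=
  ContinuousLinearMap.ext_on hx (Set.forall_mem_range.mpr h)

section Evaluation

variable {X : Type*} [NormedAddCommGroup X] [NormedSpace ℝ X] (x : ℕ → X)
  (F : Set (StrongDual ℝ X))

noncomputable abbrev evalOn (i : ℕ) (p : StrongDual.toWeakDual '' F) : ℝ :=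
  (p : WeakDual ℝ X) (x i)

lemma preimage_image_singleton_add_inter_eq_cylinder {g : StrongDual ℝ X} (hg : g ∈ F) (n : ℕ) :
    (Subtype.val ⁻¹' (StrongDual.toWeakDual ''
        (({g} + {f : StrongDual ℝ X | ∀ i < n, f (x i) = 0}) ∩ F)) :
      Set ↥(StrongDual.toWeakDual '' F)) =
    cylinder (evalOn x F) ⟨StrongDual.toWeakDual g, Set.mem_image_of_mem _ hg⟩ n := by
  ext ⟨_, f, hf, rfl⟩
  simp only [Set.mem_preimage, Set.mem_image, Set.mem_inter_iff,
    StrongDual.mem_singleton_add_setOf_forall_eq_zero]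
  constructor
  · rintro ⟨f', ⟨hf'g, -⟩, hf'f⟩
    obtain rfl := StrongDual.toWeakDual.injective hf'f
    exact hf'g
  · exact fun hfg => ⟨f, ⟨hfg, hf⟩, rfl⟩

lemma continuous_evalOn (i : ℕ) : Continuous (evalOn x F i) :=
  (WeakDual.eval_continuous (x i)).comp continuous_subtype_val

lemma finite_range_evalOn {i : ℕ} (hfin : ((fun f : StrongDual ℝ X => f (x i)) '' F).Finite) :
    (Set.range (evalOn x F i)).Finite := by
  refine hfin.subset ?_
  rintro _ ⟨⟨_, f, hf, rfl⟩, rfl⟩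
  exact ⟨f, hf, rfl⟩

lemma eq_of_forall_evalOn_eq (hx : Dense (Submodule.span ℝ (Set.range x) : Set X))
    (p q : StrongDual.toWeakDual '' F) (h : ∀ i, evalOn x F i p = evalOn x F i q) : p = q :=
  Subtype.ext (WeakDual.ext_of_dense_span hx h)

lemma setOf_preimage_image_singleton_add_inter_eq_setOf_cylinder :
    {s | ∃ g ∈ F, ∃ n : ℕ, s = Subtype.val ⁻¹' (StrongDual.toWeakDual ''
      (({g} + {f : StrongDual ℝ X | ∀ i < n, f (x i) = 0}) ∩ F))} =
      {s | ∃ a n, s = cylinder (evalOn x F) a n} := by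
  ext s
  constructor
  · rintro ⟨g, hg, n, rfl⟩
    exact ⟨_, n, preimage_image_singleton_add_inter_eq_cylinder x F hg n⟩
  · rintro ⟨⟨_, g, hg, rfl⟩, n, rfl⟩
    exact ⟨g, hg, n, (preimage_image_singleton_add_inter_eq_cylinder x F hg n).symm⟩

end Evaluation

theorem clopen_base_of_weakStar_topology_general
    {X : Type*} [NormedAddCommGroup X] [NormedSpace ℝ X]
    (x : ℕ → X) (xs : ℕ → StrongDual ℝ X) (hbasis : IsMBasis x xs)
    (M : ℕ → Set (StrongDual ℝ X))
    (hM : ∀ n : ℕ, M n = {f : StrongDual ℝ X | ∀ i < n, f (x i) = 0})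
    (F : Set (StrongDual ℝ X))
    (hFcpt : IsCompact (StrongDual.toWeakDual '' F))
    (hfin : ∀ i : ℕ, ((fun f : StrongDual ℝ X => f (x i)) '' F).Finite) :
    (∀ h ∈ F, ∀ n : ℕ,
      IsClopen (Subtype.val ⁻¹' (StrongDual.toWeakDual '' (({h} + M n) ∩ F)) :
        Set ↥(StrongDual.toWeakDual '' F))) ∧
    TopologicalSpace.IsTopologicalBasis
      {s : Set ↥(StrongDual.toWeakDual '' F) | ∃ h ∈ F, ∃ n : ℕ,
        s = Subtype.val ⁻¹' (StrongDual.toWeakDual '' (({h} + M n) ∩ F))} := by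
  obtain rfl : M = fun n => {f : StrongDual ℝ X | ∀ i < n, f (x i) = 0} := funext hM
  have : CompactSpace ↥(StrongDual.toWeakDual '' F) := isCompact_iff_compactSpace.mp hFcpt
  have hcont := continuous_evalOn x F
  have hrange i := finite_range_evalOn x F (hfin i)
  have hsep := eq_of_forall_evalOn_eq x F (dense_iff_closure_eq.mpr hbasis.2.1)
  beta_reduce
  refine ⟨fun h hh n => ?_, ?_⟩
  · rw [preimage_image_singleton_add_inter_eq_cylinder x F hh]
    exact isClopen_cylinder hcont hrange _ n
  · rw [setOf_preimage_image_singleton_add_inter_eq_setOf_cylinder]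
    exact isTopologicalBasis_cylinder hcont hrange hsep

/-- For a bounded weak-* compact set `F` whose evaluations at each `x i` are finite sets, the
traces `(h + M n) ∩ F` are clopen in the relative weak-* topology of `F` and form a base of
that topology. -/
theorem clopen_base_of_weakStar_topology
    {X : Type*} [NormedAddCommGroup X] [NormedSpace ℝ X] [CompleteSpace X]
    (x : ℕ → X) (xs : ℕ → StrongDual ℝ X) (hbasis : IsMBasis x xs)
    (M : ℕ → Set (StrongDual ℝ X))
    (hM : ∀ n : ℕ, M n = {f : StrongDual ℝ X | ∀ i < n, f (x i) = 0})
    (F : Set (StrongDual ℝ X)) (hFbdd : Bornology.IsBounded F)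
    (hFcpt : IsCompact (StrongDual.toWeakDual '' F))
    (hfin : ∀ i : ℕ, ((fun f : StrongDual ℝ X => f (x i)) '' F).Finite) :
    (∀ h ∈ F, ∀ n : ℕ,
      IsClopen (Subtype.val ⁻¹' (StrongDual.toWeakDual '' (({h} + M n) ∩ F)) :
        Set ↥(StrongDual.toWeakDual '' F))) ∧
    TopologicalSpace.IsTopologicalBasis
      {s : Set ↥(StrongDual.toWeakDual '' F) | ∃ h ∈ F, ∃ n : ℕ,
        s = Subtype.val ⁻¹' (StrongDual.toWeakDual '' (({h} + M n) ∩ F))} :=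
  clopen_base_of_weakStar_topology_general x xs hbasis M hM F hFcpt hfin
end
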